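/- arXiv:1908.02157 — 7 statements merged into one kernel-verified Lean document; each statement's English description precedes it below -/
import Mathlib

section
/- For every q ∈ [1,∞) there exists a constant C > 0 such that for every odd function f ∈ C¹((−1,1)) with ∫_{−1}^{1}(1−y²)|f'(y)|² dy < ∞ one has (∫_{−1}^{1}|f(y)|^q dy)^{1/q} ≤ C (∫_{−1}^{1}(1−y²)|f'(y)|² dy)^{1/2}. -/
/-!
Oddness gives `f 0 = 0`, so by Cauchy–Schwarz with the weight `1 - t²`,
`|f y|² ≤ (∫_0^|y| (1 - t²)|f'|²) (∫_0^|y| dt / (1 - t²)) ≤ E · (-log (1 - |y|))`,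
where `E` is the weighted energy. Since `-log s ≤ 2p s^{-1/(2p)}`, the function
`(-log (1 - |y|))^{q/2}` is dominated by a multiple of `(1 - |y|)^{-1/2}`, which is integrable
on `(-1, 1)`.
-/

open MeasureTheory Set ENNReal

theorem Real.neg_log_rpow_le {s p : ℝ} (hs0 : 0 < s) (hs1 : s ≤ 1) (hp : 0 < p) :
    (-Real.log s) ^ p ≤ (2 * p) ^ p * s ^ (-(1/2) : ℝ) := by
  have hlog : 0 ≤ -Real.log s := neg_nonneg.2 (Real.log_nonpos hs0.le hs1)
  -- `log x ≤ x ^ ε / ε` with `ε = 1 / (2p)`, applied to `x = s⁻¹`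
  have hε : 0 < 1 / (2 * p) := by positivity
  have h := Real.log_le_rpow_div (inv_pos.2 hs0).le hε
  rw [Real.log_inv, Real.inv_rpow hs0.le, ← Real.rpow_neg hs0.le, div_div_eq_mul_div,
    div_one] at h
  calc (-Real.log s) ^ p ≤ (s ^ (-(1 / (2 * p))) * (2 * p)) ^ p :=
        Real.rpow_le_rpow hlog h hp.le
    _ = (2 * p) ^ p * s ^ (-(1/2) : ℝ) := by
        rw [Real.mul_rpow (by positivity) (by positivity), ← Real.rpow_mul hs0.le, mul_comm]
        congr 2
        field_simp

theorem neg_log_one_sub_abs_nonneg {y : ℝ} (hy : y ∈ Ioo (-1:ℝ) 1) :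
    0 ≤ -Real.log (1 - |y|) :=
  neg_nonneg.2 (Real.log_nonpos (by linarith [abs_lt.2 hy]) (by linarith [abs_nonneg y]))

theorem integrableOn_one_sub_rpow_neg_half_add :
    IntegrableOn (fun y : ℝ => (1 - y) ^ (-(1/2) : ℝ) + (1 + y) ^ (-(1/2) : ℝ))
      (Ioo (-1) 1) := by
  have h :=
    intervalIntegral.intervalIntegrable_rpow' (a := 0) (b := 2) (r := -(1/2)) (by norm_num)
  have h₁ := (h.comp_sub_left 1).symm
  have h₂ := h.comp_add_left 1
  norm_num at h₁ h₂
  rw [← intervalIntegrable_iff_integrableOn_Ioo_of_le (by norm_num)]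
  exact h₁.add h₂

theorem integrableOn_neg_log_one_sub_abs_rpow {p : ℝ} (hp : 0 < p) :
    IntegrableOn (fun y : ℝ => (-Real.log (1 - |y|)) ^ p) (Ioo (-1) 1) := by
  refine (integrableOn_one_sub_rpow_neg_half_add.const_mul ((2 * p) ^ p)).mono'
    (Measurable.aestronglyMeasurable (by fun_prop))
    ((ae_restrict_iff' measurableSet_Ioo).2 (ae_of_all _ fun y hy => ?_))
  have h₁ : (0:ℝ) ≤ (1 - y) ^ (-(1/2) : ℝ) := Real.rpow_nonneg (by linarith [hy.2]) _
  have h₂ : (0:ℝ) ≤ (1 + y) ^ (-(1/2) : ℝ) := Real.rpow_nonneg (by linarith [hy.1]) _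
  have hsum :
      (1 - |y|) ^ (-(1/2) : ℝ) ≤ (1 - y) ^ (-(1/2) : ℝ) + (1 + y) ^ (-(1/2) : ℝ) := by
    rcases abs_cases y with ⟨hy, -⟩ | ⟨hy, -⟩ <;> rw [hy]
    · linarith
    · rw [sub_neg_eq_add]; linarith
  rw [Real.norm_of_nonneg (Real.rpow_nonneg (neg_log_one_sub_abs_nonneg hy) _)]
  calc (-Real.log (1 - |y|)) ^ p ≤ (2 * p) ^ p * (1 - |y|) ^ (-(1/2) : ℝ) :=
        Real.neg_log_rpow_le (by linarith [abs_lt.2 hy]) (by linarith [abs_nonneg y]) hp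
    _ ≤ _ := by gcongr

theorem lintegral_enorm_le_weighted {α E : Type*} [MeasurableSpace α] [NormedAddCommGroup E]
    {μ : Measure α} {g : α → E} {w : α → ℝ} (hg : AEStronglyMeasurable g μ)
    (hw : AEMeasurable w μ) (hw_pos : ∀ᵐ a ∂μ, 0 < w a) :
    ∫⁻ a, ‖g a‖ₑ ∂μ ≤
      (∫⁻ a, ENNReal.ofReal (w a * ‖g a‖ ^ 2) ∂μ) ^ (1/2 : ℝ) *
      (∫⁻ a, ENNReal.ofReal (w a)⁻¹ ∂μ) ^ (1/2 : ℝ) := by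
  set u : α → ℝ≥0∞ := fun a => ENNReal.ofReal (√(w a) * ‖g a‖)
  set v : α → ℝ≥0∞ := fun a => ENNReal.ofReal (√(w a))⁻¹
  have hu : AEMeasurable u μ := ((hw.sqrt).mul hg.norm.aemeasurable).ennreal_ofReal
  have hv : AEMeasurable v μ := (hw.sqrt.inv).ennreal_ofReal
  have huv : ∫⁻ a, ‖g a‖ₑ ∂μ = ∫⁻ a, (u * v) a ∂μ := by
    refine lintegral_congr_ae (hw_pos.mono fun a ha => ?_)
    have : √(w a) ≠ 0 := (Real.sqrt_pos.2 ha).ne'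
    simp only [Pi.mul_apply, u, v, ← ENNReal.ofReal_mul' (inv_nonneg.2 (Real.sqrt_nonneg _))]
    rw [mul_comm, inv_mul_cancel_left₀ this, ofReal_norm]
  have hu2 : ∀ᵐ a ∂μ, u a ^ (2:ℝ) = ENNReal.ofReal (w a * ‖g a‖ ^ 2) :=
    hw_pos.mono fun a ha => by
      rw [ENNReal.ofReal_rpow_of_nonneg (by positivity) zero_le_two, Real.rpow_two, mul_pow,
        Real.sq_sqrt ha.le]
  have hv2 : ∀ᵐ a ∂μ, v a ^ (2:ℝ) = ENNReal.ofReal (w a)⁻¹ :=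
    hw_pos.mono fun a ha => by
      rw [ENNReal.ofReal_rpow_of_nonneg (by positivity) zero_le_two, Real.rpow_two, inv_pow,
        Real.sq_sqrt ha.le]
  rw [huv]
  refine (ENNReal.lintegral_mul_le_Lp_mul_Lq μ Real.HolderConjugate.two_two hu hv).trans_eq ?_
  rw [lintegral_congr_ae hu2, lintegral_congr_ae hv2]

theorem enorm_sub_le_lintegral_of_hasDerivAt {E : Type*} [NormedAddCommGroup E] [NormedSpace ℝ E]
    [CompleteSpace E] {f f' : ℝ → E} {a b : ℝ} (hab : a ≤ b)
    (hf : ∀ x ∈ Icc a b, HasDerivAt f (f' x) x) (hf' : ContinuousOn f' (Icc a b)) :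
    ‖f b - f a‖ₑ ≤ ∫⁻ x in Ioo a b, ‖f' x‖ₑ := by
  rw [← intervalIntegral.integral_eq_sub_of_hasDerivAt (by rwa [uIcc_of_le hab])
    (hf'.intervalIntegrable_of_Icc hab), intervalIntegral.integral_of_le hab,
    integral_Ioc_eq_integral_Ioo]
  exact enorm_integral_le_lintegral_enorm _

theorem integral_inv_one_sub {y : ℝ} (hy : y < 1) :
    ∫ t in (0:ℝ)..y, (1 - t)⁻¹ = -Real.log (1 - y) := by
  rw [intervalIntegral.integral_comp_sub_left (fun x => x⁻¹), sub_zero,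
    integral_inv_of_pos (by linarith) one_pos, one_div, Real.log_inv]

theorem lintegral_inv_one_sub_sq_le {y : ℝ} (hy0 : 0 ≤ y) (hy1 : y < 1) :
    ∫⁻ t in Ioo 0 y, ENNReal.ofReal (1 - t ^ 2)⁻¹ ≤
      ENNReal.ofReal (-Real.log (1 - y)) := by
  have hcont : ContinuousOn (fun t : ℝ => (1 - t)⁻¹) (Icc 0 y) :=
    ContinuousOn.inv₀ (by fun_prop) fun t ht => by linarith [ht.2]
  calc ∫⁻ t in Ioo 0 y, ENNReal.ofReal (1 - t ^ 2)⁻¹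
      ≤ ∫⁻ t in Ioo 0 y, ENNReal.ofReal (1 - t)⁻¹ := by
        refine setLIntegral_mono' measurableSet_Ioo fun t ht => ENNReal.ofReal_le_ofReal ?_
        have : t < 1 := ht.2.trans hy1
        exact inv_anti₀ (by linarith) (by nlinarith [ht.1])
    _ = ENNReal.ofReal (∫ t in Ioo 0 y, (1 - t)⁻¹) := by
        refine (ofReal_integral_eq_lintegral_ofReal
          (hcont.integrableOn_Icc.mono_set Ioo_subset_Icc_self) ?_).symm
        exact (ae_restrict_iff' measurableSet_Ioo).2 (ae_of_all _ fun t ht =>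
          inv_nonneg.2 (by linarith [ht.2]))
    _ = ENNReal.ofReal (-Real.log (1 - y)) := by
        rw [← integral_Ioc_eq_integral_Ioo, ← intervalIntegral.integral_of_le hy0,
          integral_inv_one_sub hy1]

theorem enorm_le_of_hasDerivAt_of_odd {f f' : ℝ → ℂ}
    (hderiv : ∀ y ∈ Ioo (-1:ℝ) 1, HasDerivAt f (f' y) y)
    (hcont : ContinuousOn f' (Ioo (-1:ℝ) 1)) (hodd : ∀ y ∈ Ioo (-1:ℝ) 1, f (-y) = - f y)
    {y : ℝ} (hy : y ∈ Ioo (-1:ℝ) 1) :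
    ‖f y‖ₑ ≤
      (∫⁻ t in Ioo (-1:ℝ) 1, ENNReal.ofReal ((1 - t ^ 2) * ‖f' t‖ ^ 2)) ^ (1/2 : ℝ) *
      ENNReal.ofReal (-Real.log (1 - |y|)) ^ (1/2 : ℝ) := by
  have hf0 : f 0 = 0 := by
    have h := hodd 0 ⟨by norm_num, by norm_num⟩
    rw [neg_zero, eq_neg_iff_add_eq_zero, ← two_mul, mul_eq_zero] at h
    exact h.resolve_left two_ne_zero
  have habs : ‖f y‖ₑ = ‖f |y|‖ₑ := by
    rcases abs_cases y with ⟨h, -⟩ | ⟨h, -⟩ <;> rw [h]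
    rw [hodd y hy, enorm_neg]
  set z := |y|
  have hz0 : 0 ≤ z := abs_nonneg y
  have hz1 : z < 1 := abs_lt.2 hy
  have hIcc : Icc 0 z ⊆ Ioo (-1:ℝ) 1 := fun t ht => ⟨by linarith [ht.1], ht.2.trans_lt hz1⟩
  have hIoo : Ioo 0 z ⊆ Ioo (-1:ℝ) 1 := Ioo_subset_Icc_self.trans hIcc
  have hweight : ∀ᵐ t ∂volume.restrict (Ioo 0 z), 0 < 1 - t ^ 2 :=
    (ae_restrict_iff' measurableSet_Ioo).2 (ae_of_all _ fun t ht => by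
      nlinarith [ht.1, ht.2])
  calc ‖f y‖ₑ = ‖f z - f 0‖ₑ := by rw [habs, hf0, sub_zero]
    _ ≤ ∫⁻ t in Ioo 0 z, ‖f' t‖ₑ :=
        enorm_sub_le_lintegral_of_hasDerivAt hz0 (fun t ht => hderiv t (hIcc ht))
          (hcont.mono hIcc)
    _ ≤ (∫⁻ t in Ioo 0 z, ENNReal.ofReal ((1 - t ^ 2) * ‖f' t‖ ^ 2)) ^ (1/2 : ℝ) *
          (∫⁻ t in Ioo 0 z, ENNReal.ofReal (1 - t ^ 2)⁻¹) ^ (1/2 : ℝ) :=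
        lintegral_enorm_le_weighted ((hcont.mono hIoo).aestronglyMeasurable measurableSet_Ioo)
          (by fun_prop) hweight
    _ ≤ _ := by
        gcongr
        exact lintegral_inv_one_sub_sq_le hz0 hz1

/-- Sobolev-type embedding (Lemma 3.4 / `lem:LpH1`): for every `q ∈ [1,∞)` there is a
constant `C > 0` such that every odd `C¹` function on `(-1,1)` with finite weighted energy
satisfies `‖f‖_{L^q(-1,1)} ≤ C ‖(1-y²)^{1/2} f'‖_{L²(-1,1)}`. -/
theorem stmt0 (q : ℝ) (hq : 1 ≤ q) :
    ∃ C : ℝ, 0 < C ∧ ∀ f f' : ℝ → ℂ,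
      (∀ y ∈ Ioo (-1:ℝ) 1, HasDerivAt f (f' y) y) →
      ContinuousOn f' (Ioo (-1:ℝ) 1) →
      (∀ y ∈ Ioo (-1:ℝ) 1, f (-y) = - f y) →
      (∫⁻ y in Ioo (-1:ℝ) 1, ENNReal.ofReal ((1 - y^2) * ‖f' y‖^2)) < ⊤ →
      (∫⁻ y in Ioo (-1:ℝ) 1, ENNReal.ofReal (‖f y‖ ^ q)) ^ (1/q) ≤
        ENNReal.ofReal C *
          (∫⁻ y in Ioo (-1:ℝ) 1, ENNReal.ofReal ((1 - y^2) * ‖f' y‖^2)) ^ (1/2 : ℝ) := by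
  have hq0 : 0 < q := one_pos.trans_le hq
  set A := ∫⁻ y in Ioo (-1:ℝ) 1, ENNReal.ofReal ((-Real.log (1 - |y|)) ^ (q/2))
  have hA : A ^ (1/q) ≠ ⊤ :=
    rpow_ne_top_of_nonneg (by positivity)
      (integrableOn_neg_log_one_sub_abs_rpow (half_pos hq0)).lintegral_lt_top.ne
  refine ⟨(A ^ (1/q)).toReal + 1, by positivity, fun f f' hderiv hcont hodd hE => ?_⟩
  set E := ∫⁻ y in Ioo (-1:ℝ) 1, ENNReal.ofReal ((1 - y^2) * ‖f' y‖^2)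
  have hpoint : ∀ y ∈ Ioo (-1:ℝ) 1,
      ENNReal.ofReal (‖f y‖ ^ q) ≤
        E ^ (q/2) * ENNReal.ofReal ((-Real.log (1 - |y|)) ^ (q/2)) := by
    intro y hy
    rw [← ofReal_rpow_of_nonneg (norm_nonneg _) hq0.le, ofReal_norm,
      ← ofReal_rpow_of_nonneg (neg_log_one_sub_abs_nonneg hy) (by positivity)]
    calc ‖f y‖ₑ ^ q
        ≤ (E ^ (1/2 : ℝ) * ENNReal.ofReal (-Real.log (1 - |y|)) ^ (1/2 : ℝ)) ^ q :=
          rpow_le_rpow (enorm_le_of_hasDerivAt_of_odd hderiv hcont hodd hy) hq0.le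
      _ = _ := by
          rw [mul_rpow_of_nonneg _ _ hq0.le, ← rpow_mul, ← rpow_mul, one_div_mul_eq_div]
  calc (∫⁻ y in Ioo (-1:ℝ) 1, ENNReal.ofReal (‖f y‖ ^ q)) ^ (1/q)
      ≤ (E ^ (q/2) * A) ^ (1/q) := by
        gcongr
        rw [← lintegral_const_mul' _ _ (rpow_ne_top_of_nonneg (by positivity) hE.ne)]
        exact setLIntegral_mono' measurableSet_Ioo hpoint
    _ = A ^ (1/q) * E ^ (1/2 : ℝ) := by
        rw [mul_rpow_of_nonneg _ _ (by positivity), ← rpow_mul, mul_comm]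
        congr 2
        field_simp
    _ ≤ ENNReal.ofReal ((A ^ (1/q)).toReal + 1) * E ^ (1/2 : ℝ) := by
        gcongr
        calc A ^ (1/q) = ENNReal.ofReal (A ^ (1/q)).toReal := (ofReal_toReal hA).symm
          _ ≤ _ := ofReal_le_ofReal (le_add_of_nonneg_right zero_le_one)
end

section
/- Let (f_n)_{n∈ℕ} ⊂ C¹((−1,1)) be a sequence of odd functions for which there exists M > 0 with ∫_{−1}^{1}(1−y²)|f_n'(y)|² dy ≤ M for all n ∈ ℕ. Then there exists a subsequence (f_{n_k})_{k∈ℕ} that is a Cauchy sequence with respect to the L²(−1,1) norm. -/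
/-!
Oddness gives `fₙ 0 = 0`. The fundamental theorem of calculus and Cauchy–Schwarz against the
weight `1 - t²` (used in the AM–GM form `|F'| ≤ (r (1-t²)|F'|² + (r (1-t²))⁻¹) / 2`, optimized
over `r`) give `‖fₙ v - fₙ u‖² ≤ M |g v - g u|` with `g y = y / √(1 - y²)`, a primitive of
`(1 - y²)^(-3/2) ≥ (1 - y²)⁻¹`. So the `fₙ` are equicontinuous on `(-1,1)` and dominated by
`M / √(1 - y²)`, which is integrable (its primitive is `M arcsin`). A subsequence converging at
every rational point is then pointwise Cauchy on `(-1,1)`, and dominated convergence makes it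
Cauchy in `L²`.
-/

open MeasureTheory Set ENNReal Filter Topology

lemma le_half_mul_add_inv {x a r : ℝ} (ha : 0 < a) (hr : 0 < r) :
    x ≤ (r * (a * x ^ 2) + (r * a)⁻¹) / 2 := by
  have hra : 0 < r * a := mul_pos hr ha
  have key : r * (a * x ^ 2) + (r * a)⁻¹ - 2 * x = (r * a * x - 1) ^ 2 / (r * a) := by
    field_simp
    ring
  have : 0 ≤ (r * a * x - 1) ^ 2 / (r * a) := by positivity
  linarith

lemma sq_le_mul_of_forall_le_half_add {x M W : ℝ} (hx : 0 ≤ x) (hM : 0 < M) (hW : 0 ≤ W)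
    (h : ∀ r > 0, x ≤ (r * M + r⁻¹ * W) / 2) : x ^ 2 ≤ M * W := by
  rcases hx.eq_or_lt with rfl | hx
  · simpa using mul_nonneg hM.le hW
  · have := h (x / M) (div_pos hx hM)
    field_simp at this
    nlinarith

lemma one_sub_sq_pos {t : ℝ} (ht : t ∈ Ioo (-1 : ℝ) 1) : 0 < 1 - t ^ 2 := by
  nlinarith [ht.1, ht.2]

lemma hasDerivAt_div_sqrt_one_sub_sq {y : ℝ} (hy : y ∈ Ioo (-1 : ℝ) 1) :
    HasDerivAt (fun t => t / √(1 - t ^ 2)) ((1 - y ^ 2)⁻¹ * (√(1 - y ^ 2))⁻¹) y := by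
  have hpos := one_sub_sq_pos hy
  have hs : 0 < √(1 - y ^ 2) := Real.sqrt_pos.2 hpos
  have hsq := Real.sq_sqrt hpos.le
  have h1 : HasDerivAt (fun t : ℝ => 1 - t ^ 2) (-(2 * y)) y := by
    simpa using ((hasDerivAt_pow 2 y).const_sub 1)
  refine ((hasDerivAt_id' y).div (h1.sqrt hpos.ne') hs.ne').congr_deriv ?_
  field_simp
  rw [hsq]
  ring

lemma continuousOn_inv_one_sub_sq : ContinuousOn (fun t : ℝ => (1 - t ^ 2)⁻¹) (Ioo (-1) 1) :=
  (continuousOn_const.sub (continuousOn_pow 2)).inv₀ fun _ ht => (one_sub_sq_pos ht).ne'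

lemma integral_inv_one_sub_sq_le {u v : ℝ} (hu : -1 < u) (huv : u ≤ v) (hv : v < 1) :
    ∫ t in u..v, (1 - t ^ 2)⁻¹ ≤ v / √(1 - v ^ 2) - u / √(1 - u ^ 2) := by
  have hsub : uIcc u v ⊆ Ioo (-1) 1 := by
    rw [uIcc_of_le huv]; exact Icc_subset_Ioo hu hv
  have hcont' : ContinuousOn (fun t : ℝ => (1 - t ^ 2)⁻¹ * (√(1 - t ^ 2))⁻¹) (uIcc u v) :=
    (continuousOn_inv_one_sub_sq.mono hsub).mul <|
      ((continuousOn_const.sub (continuousOn_pow 2)).sqrt).inv₀ fun t ht =>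
        (Real.sqrt_pos.2 (one_sub_sq_pos (hsub ht))).ne'
  rw [← intervalIntegral.integral_eq_sub_of_hasDerivAt
    (fun t ht => hasDerivAt_div_sqrt_one_sub_sq (hsub ht)) hcont'.intervalIntegrable]
  refine intervalIntegral.integral_mono_on huv
    ((continuousOn_inv_one_sub_sq.mono hsub).intervalIntegrable) hcont'.intervalIntegrable
    fun t ht => ?_
  have hpos := one_sub_sq_pos (hsub (Icc_subset_uIcc ht))
  have hle : (√(1 - t ^ 2))⁻¹ ≥ 1 := by
    rw [ge_iff_le, one_le_inv₀ (Real.sqrt_pos.2 hpos)]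
    exact Real.sqrt_le_one.mpr (by nlinarith)
  nlinarith [inv_pos.2 hpos]

lemma intervalIntegral_weighted_energy_le {F' : ℝ → ℂ} {M : ℝ} (hM : 0 ≤ M)
    (hcont : ContinuousOn F' (Ioo (-1) 1))
    (hbound : ∫⁻ y in Ioo (-1 : ℝ) 1, ENNReal.ofReal ((1 - y ^ 2) * ‖F' y‖ ^ 2) ≤ ENNReal.ofReal M)
    {u v : ℝ} (hu : -1 < u) (huv : u ≤ v) (hv : v < 1) :
    ∫ t in u..v, (1 - t ^ 2) * ‖F' t‖ ^ 2 ≤ M := by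
  have hsub : Ioc u v ⊆ Ioo (-1) 1 := fun t ht => ⟨hu.trans ht.1, ht.2.trans_lt hv⟩
  have hnn : 0 ≤ᵐ[volume.restrict (Ioc u v)] fun t => (1 - t ^ 2) * ‖F' t‖ ^ 2 :=
    ae_restrict_of_forall_mem measurableSet_Ioc fun t ht =>
      mul_nonneg (one_sub_sq_pos (hsub ht)).le (sq_nonneg _)
  have hmeas : AEStronglyMeasurable (fun t => (1 - t ^ 2) * ‖F' t‖ ^ 2)
      (volume.restrict (Ioc u v)) :=
    (((continuousOn_const.sub (continuousOn_pow 2)).mul (hcont.norm.pow 2)).mono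
      hsub).aestronglyMeasurable measurableSet_Ioc
  rw [intervalIntegral.integral_of_le huv, integral_eq_lintegral_of_nonneg_ae hnn hmeas]
  exact ENNReal.toReal_le_of_le_ofReal hM ((lintegral_mono_set hsub).trans hbound)

lemma norm_sub_le_of_weighted_energy_le {F F' : ℝ → ℂ} {M : ℝ} (hM : 0 ≤ M)
    (hderiv : ∀ y ∈ Ioo (-1 : ℝ) 1, HasDerivAt F (F' y) y)
    (hcont : ContinuousOn F' (Ioo (-1) 1))
    (hbound : ∫⁻ y in Ioo (-1 : ℝ) 1, ENNReal.ofReal ((1 - y ^ 2) * ‖F' y‖ ^ 2) ≤ ENNReal.ofReal M)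
    {u v : ℝ} (hu : -1 < u) (huv : u ≤ v) (hv : v < 1) {r : ℝ} (hr : 0 < r) :
    ‖F v - F u‖ ≤ (r * M + r⁻¹ * ∫ t in u..v, (1 - t ^ 2)⁻¹) / 2 := by
  have hsub : uIcc u v ⊆ Ioo (-1) 1 := by
    rw [uIcc_of_le huv]; exact Icc_subset_Ioo hu hv
  have hF' : IntervalIntegrable F' volume u v := (hcont.mono hsub).intervalIntegrable
  have henergy : IntervalIntegrable (fun t => (1 - t ^ 2) * ‖F' t‖ ^ 2) volume u v :=
    (((continuousOn_const.sub (continuousOn_pow 2)).mul (hcont.norm.pow 2)).mono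
      hsub).intervalIntegrable
  have hweight : IntervalIntegrable (fun t : ℝ => (1 - t ^ 2)⁻¹) volume u v :=
    (continuousOn_inv_one_sub_sq.mono hsub).intervalIntegrable
  calc ‖F v - F u‖ = ‖∫ t in u..v, F' t‖ := by
        rw [intervalIntegral.integral_eq_sub_of_hasDerivAt (fun t ht => hderiv t (hsub ht)) hF']
    _ ≤ ∫ t in u..v, ‖F' t‖ := intervalIntegral.norm_integral_le_integral_norm huv
    _ ≤ ∫ t in u..v, (r * ((1 - t ^ 2) * ‖F' t‖ ^ 2) + r⁻¹ * (1 - t ^ 2)⁻¹) / 2 := by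
        refine intervalIntegral.integral_mono_on huv hF'.norm
          (((henergy.const_mul r).add (hweight.const_mul r⁻¹)).div_const 2) fun t ht => ?_
        rw [← mul_inv]
        exact le_half_mul_add_inv (one_sub_sq_pos (hsub (Icc_subset_uIcc ht))) hr
    _ = (r * (∫ t in u..v, (1 - t ^ 2) * ‖F' t‖ ^ 2) + r⁻¹ * ∫ t in u..v, (1 - t ^ 2)⁻¹) / 2 := by
        rw [intervalIntegral.integral_div, intervalIntegral.integral_add (henergy.const_mul r)
          (hweight.const_mul r⁻¹), intervalIntegral.integral_const_mul,
          intervalIntegral.integral_const_mul]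
    _ ≤ (r * M + r⁻¹ * ∫ t in u..v, (1 - t ^ 2)⁻¹) / 2 := by
        gcongr
        exact intervalIntegral_weighted_energy_le hM hcont hbound hu huv hv

lemma norm_sub_sq_le_of_weighted_energy_le {F F' : ℝ → ℂ} {M : ℝ} (hM : 0 < M)
    (hderiv : ∀ y ∈ Ioo (-1 : ℝ) 1, HasDerivAt F (F' y) y)
    (hcont : ContinuousOn F' (Ioo (-1) 1))
    (hbound : ∫⁻ y in Ioo (-1 : ℝ) 1, ENNReal.ofReal ((1 - y ^ 2) * ‖F' y‖ ^ 2) ≤ ENNReal.ofReal M)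
    {u v : ℝ} (hu : u ∈ Ioo (-1 : ℝ) 1) (hv : v ∈ Ioo (-1 : ℝ) 1) :
    ‖F v - F u‖ ^ 2 ≤ M * |v / √(1 - v ^ 2) - u / √(1 - u ^ 2)| := by
  wlog huv : u ≤ v generalizing u v
  · rw [norm_sub_rev, abs_sub_comm]
    exact this hv hu (le_of_not_ge huv)
  have hW : 0 ≤ ∫ t in u..v, (1 - t ^ 2)⁻¹ :=
    intervalIntegral.integral_nonneg huv fun t ht =>
      (inv_pos.2 (one_sub_sq_pos ⟨hu.1.trans_le ht.1, ht.2.trans_lt hv.2⟩)).le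
  calc ‖F v - F u‖ ^ 2 ≤ M * ∫ t in u..v, (1 - t ^ 2)⁻¹ :=
        sq_le_mul_of_forall_le_half_add (norm_nonneg _) hM hW fun r hr =>
          norm_sub_le_of_weighted_energy_le hM.le hderiv hcont hbound hu.1 huv hv.2 hr
    _ ≤ M * |v / √(1 - v ^ 2) - u / √(1 - u ^ 2)| := by
        gcongr
        exact (integral_inv_one_sub_sq_le hu.1 huv hv.2).trans (le_abs_self _)

lemma norm_sq_le_of_weighted_energy_le_of_odd {F F' : ℝ → ℂ} {M : ℝ} (hM : 0 < M)
    (hderiv : ∀ y ∈ Ioo (-1 : ℝ) 1, HasDerivAt F (F' y) y)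
    (hcont : ContinuousOn F' (Ioo (-1) 1))
    (hodd : ∀ y ∈ Ioo (-1 : ℝ) 1, F (-y) = -F y)
    (hbound : ∫⁻ y in Ioo (-1 : ℝ) 1, ENNReal.ofReal ((1 - y ^ 2) * ‖F' y‖ ^ 2) ≤ ENNReal.ofReal M)
    {y : ℝ} (hy : y ∈ Ioo (-1 : ℝ) 1) :
    ‖F y‖ ^ 2 ≤ M / √(1 - y ^ 2) := by
  have h0 : (0 : ℝ) ∈ Ioo (-1 : ℝ) 1 := by norm_num
  have hF0 : F 0 = 0 := by
    have := hodd 0 h0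
    rw [neg_zero] at this
    linear_combination this / 2
  have hs : 0 < √(1 - y ^ 2) := Real.sqrt_pos.2 (one_sub_sq_pos hy)
  have hy1 : |y| ≤ 1 := abs_le.2 ⟨hy.1.le, hy.2.le⟩
  calc ‖F y‖ ^ 2 = ‖F y - F 0‖ ^ 2 := by rw [hF0, sub_zero]
    _ ≤ M * |y / √(1 - y ^ 2) - 0 / √(1 - 0 ^ 2)| :=
        norm_sub_sq_le_of_weighted_energy_le hM hderiv hcont hbound h0 hy
    _ = M * |y| / √(1 - y ^ 2) := by
        rw [zero_div, sub_zero, abs_div, abs_of_pos hs, mul_div_assoc]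
    _ ≤ M / √(1 - y ^ 2) := by
        gcongr
        exact mul_le_of_le_one_right hM.le hy1
lemma integrableOn_one_div_sqrt_one_sub_sq :
    IntegrableOn (fun y : ℝ => 1 / √(1 - y ^ 2)) (Ioo (-1) 1) :=
  (intervalIntegral.integrableOn_deriv_of_nonneg Real.continuous_arcsin.continuousOn
    (fun _ hy => Real.hasDerivAt_arcsin hy.1.ne' hy.2.ne) fun _ _ => by positivity).mono_set
    Ioo_subset_Ioc_self

lemma exists_strictMono_forall_tendsto {ι E : Type*} [Countable ι] [NormedAddCommGroup E]
    [ProperSpace E] (g : ℕ → ι → E) (hg : ∀ i, ∃ C, ∀ n, ‖g n i‖ ≤ C) :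
    ∃ φ : ℕ → ℕ, StrictMono φ ∧ ∀ i, ∃ z, Tendsto (fun k => g (φ k) i) atTop (𝓝 z) := by
  choose C hC using hg
  obtain ⟨z, -, φ, hφ, hlim⟩ := (isCompact_univ_pi fun i => isCompact_closedBall (0 : E) (C i)).tendsto_subseq
    (x := g) fun n i _ => mem_closedBall_zero_iff.2 (hC i n)
  exact ⟨φ, hφ, fun i => ⟨z i, tendsto_pi_nhds.1 hlim i⟩⟩

lemma EquicontinuousAt.cauchySeq_of_mem_closure {X E : Type*} [TopologicalSpace X]
    [PseudoMetricSpace E] {u : ℕ → X → E} {s : Set X} {x : X} (hu : EquicontinuousAt u x)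
    (hs : ∀ y ∈ s, CauchySeq fun n => u n y) (hx : x ∈ closure s) :
    CauchySeq fun n => u n x := by
  rw [Metric.cauchySeq_iff]
  intro ε hε
  obtain ⟨y, hys, hy⟩ := ((mem_closure_iff_frequently.1 hx).and_eventually
    (Metric.equicontinuousAt_iff_right.1 hu (ε / 3) (by positivity))).exists
  obtain ⟨N, hN⟩ := Metric.cauchySeq_iff.1 (hs y hys) (ε / 3) (by positivity)
  refine ⟨N, fun m hm n hn => ?_⟩
  calc dist (u m x) (u n x) ≤ dist (u m x) (u m y) + dist (u m y) (u n y) + dist (u n y) (u n x) :=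
        dist_triangle4 _ _ _ _
    _ < ε / 3 + ε / 3 + ε / 3 := by
        gcongr
        · exact hy m
        · exact hN m hm n hn
        · rw [dist_comm]; exact hy n
    _ = ε := by ring

lemma tendsto_eLpNorm_two_sub_of_dominated {α E : Type*} [MeasurableSpace α]
    [NormedAddCommGroup E] {μ : Measure α} {u : ℕ → α → E}
    (hmeas : ∀ n, AEStronglyMeasurable (u n) μ) {h : α → ℝ} (hh : Integrable h μ)
    (hbound : ∀ n, ∀ᵐ y ∂μ, ‖u n y‖ ^ 2 ≤ h y) (hcauchy : ∀ᵐ y ∂μ, CauchySeq fun n => u n y) :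
    Tendsto (fun p : ℕ × ℕ => eLpNorm (u p.1 - u p.2) 2 μ) atTop (𝓝 0) := by
  have henorm : ∀ z : E, ‖z‖ₑ ^ (2 : ℝ) = ENNReal.ofReal (‖z‖ ^ 2) := fun z => by
    rw [← ofReal_norm, ENNReal.ofReal_rpow_of_nonneg (norm_nonneg z) zero_le_two,
      Real.rpow_two]
  have hlintegral : Tendsto (fun p : ℕ × ℕ => ∫⁻ y, ‖u p.1 y - u p.2 y‖ₑ ^ (2 : ℝ) ∂μ) atTop
      (𝓝 0) := by
    rw [← lintegral_zero]
    refine tendsto_lintegral_filter_of_dominated_convergence' (fun y => ENNReal.ofReal (4 * h y))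
      (Eventually.of_forall fun p => ((hmeas p.1).sub (hmeas p.2)).enorm.pow_const _)
      (Eventually.of_forall fun p => ?_) (hh.const_mul 4).lintegral_lt_top.ne ?_
    · filter_upwards [hbound p.1, hbound p.2] with y h1 h2
      rw [henorm]
      refine ENNReal.ofReal_le_ofReal ?_
      have := norm_sub_le (u p.1 y) (u p.2 y)
      nlinarith [norm_nonneg (u p.1 y), norm_nonneg (u p.2 y), norm_nonneg (u p.1 y - u p.2 y),
        sq_nonneg (‖u p.1 y‖ - ‖u p.2 y‖)]
    · filter_upwards [hcauchy] with y hy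
      have hdist := ENNReal.tendsto_ofReal (cauchySeq_iff_tendsto_dist_atTop_0.1 hy)
      simp only [← edist_dist, edist_eq_enorm_sub, ENNReal.ofReal_zero] at hdist
      have := ((ENNReal.continuous_rpow_const (y := (2 : ℝ))).tendsto 0).comp hdist
      rwa [ENNReal.zero_rpow_of_pos two_pos] at this
  have hsqrt := ((ENNReal.continuous_rpow_const (y := 1 / 2)).tendsto 0).comp hlintegral
  rw [ENNReal.zero_rpow_of_pos (by norm_num)] at hsqrt
  refine hsqrt.congr fun p => ?_
  simp only [Function.comp_apply]
  rw [eLpNorm_eq_lintegral_rpow_enorm_toReal two_ne_zero ENNReal.ofNat_ne_top]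
  simp

lemma equicontinuousAt_of_norm_sub_sq_le {ι X E : Type*} [TopologicalSpace X]
    [SeminormedAddCommGroup E] {u : ι → X → E} {g : X → ℝ} {M : ℝ} {s : Set X} {x : X}
    (hs : s ∈ 𝓝 x) (hg : ContinuousAt g x)
    (h : ∀ i, ∀ y ∈ s, ‖u i y - u i x‖ ^ 2 ≤ M * |g y - g x|) : EquicontinuousAt u x := by
  refine Metric.equicontinuousAt_of_continuity_modulus (fun y => √(M * |g y - g x|)) ?_ u ?_
  · have : Tendsto (fun y => √(M * |g y - g x|)) (𝓝 x) (𝓝 √(M * |g x - g x|)) :=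
      (continuousAt_const.mul (hg.sub continuousAt_const).abs).sqrt
    simpa using this
  · filter_upwards [hs] with y hy i
    rw [dist_comm, dist_eq_norm]
    exact Real.le_sqrt_of_sq_le (h i y hy)

/-- Compactness (Lemma `lem:compact`): a sequence of odd `C¹` functions on `(-1,1)` with
uniformly bounded weighted energy `∫ (1-y²)|fₙ'|² ≤ M` has a subsequence that is Cauchy
in `L²(-1,1)`. -/
theorem stmt1 (f f' : ℕ → ℝ → ℂ) (M : ℝ) (hM : 0 < M)
    (hderiv : ∀ n, ∀ y ∈ Ioo (-1:ℝ) 1, HasDerivAt (f n) (f' n y) y)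
    (hcont : ∀ n, ContinuousOn (f' n) (Ioo (-1:ℝ) 1))
    (hodd : ∀ n, ∀ y ∈ Ioo (-1:ℝ) 1, f n (-y) = - f n y)
    (hbound : ∀ n, (∫⁻ y in Ioo (-1:ℝ) 1, ENNReal.ofReal ((1 - y^2) * ‖f' n y‖^2))
        ≤ ENNReal.ofReal M) :
    ∃ φ : ℕ → ℕ, StrictMono φ ∧
      ∀ ε : ℝ, 0 < ε → ∃ N : ℕ, ∀ k ≥ N, ∀ l ≥ N,
        eLpNorm (f (φ k) - f (φ l)) 2 (volume.restrict (Ioo (-1:ℝ) 1))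
          < ENNReal.ofReal ε := by
  have hsq : ∀ n, ∀ y ∈ Ioo (-1 : ℝ) 1, ‖f n y‖ ^ 2 ≤ M * (1 / √(1 - y ^ 2)) := fun n y hy => by
    rw [mul_one_div]
    exact norm_sq_le_of_weighted_energy_le_of_odd hM (hderiv n) (hcont n) (hodd n) (hbound n) hy
  obtain ⟨φ, hφ, hlim⟩ := exists_strictMono_forall_tendsto
    (fun n (q : {q : ℚ // (q : ℝ) ∈ Ioo (-1 : ℝ) 1}) => f n q)
    fun q => ⟨_, fun n => Real.le_sqrt_of_sq_le (hsq n q q.2)⟩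
  have hcauchy : ∀ y ∈ Ioo (-1 : ℝ) 1, CauchySeq fun k => f (φ k) y := by
    intro y hy
    refine EquicontinuousAt.cauchySeq_of_mem_closure (s := Ioo (-1) 1 ∩ range ((↑) : ℚ → ℝ))
      (equicontinuousAt_of_norm_sub_sq_le (Ioo_mem_nhds hy.1 hy.2)
        (hasDerivAt_div_sqrt_one_sub_sq hy).continuousAt fun k z hz =>
          norm_sub_sq_le_of_weighted_energy_le hM (hderiv _) (hcont _) (hbound _) hy hz)
      ?_ (Rat.denseRange_cast.open_subset_closure_inter isOpen_Ioo hy)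
    rintro _ ⟨hq, q, rfl⟩
    obtain ⟨z, hz⟩ := hlim ⟨q, hq⟩
    exact hz.cauchySeq
  have hL2 := tendsto_eLpNorm_two_sub_of_dominated (u := fun k => f (φ k))
    (fun k => (ContinuousOn.aestronglyMeasurable (fun y hy =>
      (hderiv (φ k) y hy).continuousAt.continuousWithinAt) measurableSet_Ioo))
    (integrableOn_one_div_sqrt_one_sub_sq.const_mul M)
    (fun k => ae_restrict_of_forall_mem measurableSet_Ioo (hsq (φ k)))
    (ae_restrict_of_forall_mem measurableSet_Ioo hcauchy)
  exact ⟨φ, hφ, fun ε hε =>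
    eventually_atTop_prod_self'.1 ((tendsto_order.1 hL2).2 _ (ENNReal.ofReal_pos.2 hε))⟩
end

section
/- Let f,g ∈ C^∞((−1,1)). Then u_{f,g} belongs to C^∞([0,∞)×(−1,1)), satisfies u_{f,g}(0,y) = f(y) and ∂_s u_{f,g}(s,y)|_{s=0} = g(y) for all y ∈ (−1,1), and satisfies [∂_s² + 2y ∂_s∂_y + ∂_s − (1−y²)∂_y² + 2y ∂_y] u_{f,g}(s,y) = 0 for all (s,y) ∈ (0,∞)×(−1,1). -/
open MeasureTheory Set ENNReal

/-- The explicit solution `u_{f,g}` of the hyperboloidal initial value problem for the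
free wave equation. -/
noncomputable def ufg (f g : ℝ → ℂ) (s y : ℝ) : ℂ :=
  f 0 - (1/2) * (∫ x in (-1 + Real.exp (-s) * (1 + y))..(0:ℝ), (1 - (x:ℂ)) * deriv f x)
      + (1/2) * (∫ x in (0:ℝ)..(1 - Real.exp (-s) * (1 - y)), (1 + (x:ℂ)) * deriv f x)
      + (1/2) * (∫ x in (-1 + Real.exp (-s) * (1 + y))..(1 - Real.exp (-s) * (1 - y)), g x)

/-- Partial derivative in the first (time-like) variable. -/
noncomputable def dS (u : ℝ → ℝ → ℂ) (s y : ℝ) : ℂ := deriv (fun s' => u s' y) s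

/-- Partial derivative in the second (space-like) variable. -/
noncomputable def dY (u : ℝ → ℝ → ℂ) (s y : ℝ) : ℂ := deriv (fun y' => u s y') y

/-- The hyperboloidal wave operator
`∂_s² + 2y ∂_s∂_y + ∂_s − (1−y²)∂_y² + 2y ∂_y`. -/
noncomputable def waveOp (u : ℝ → ℝ → ℂ) (s y : ℝ) : ℂ :=
  dS (dS u) s y + 2 * (y:ℂ) * dS (dY u) s y + dS u s y
    - (1 - (y:ℂ)^2) * dY (dY u) s y + 2 * (y:ℂ) * dY u s y

/-!
In the characteristic coordinates `a = -1 + e^{-s}(1+y)` and `b = 1 - e^{-s}(1-y)` one has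
`∂_s a = -(1+a)`, `∂_s b = 1-b` and `∂_y a = ∂_y b = e^{-s}`, and the hyperboloidal wave operator
annihilates every superposition `F(a) + G(b)` of twice differentiable profiles. Splitting the
integrals defining `u_{f,g}` at `0` writes it in this form, with profiles that are primitives of
smooth functions; at `s = 0` both coordinates equal `y`, which yields the initial data.
-/

open Filter Topology intervalIntegral

section Primitive

variable {E : Type*} [NormedAddCommGroup E] {h : ℝ → E} {a b c : ℝ}

theorem ContinuousOn.intervalIntegrable_of_mem_Ioo (hh : ContinuousOn h (Ioo a b))
    {t u : ℝ} (ht : t ∈ Ioo a b) (hu : u ∈ Ioo a b) : IntervalIntegrable h volume t u :=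
  (hh.mono (ordConnected_Ioo.uIcc_subset ht hu)).intervalIntegrable

variable [NormedSpace ℝ E] [CompleteSpace E]

theorem hasDerivAt_primitive_of_continuousOn_Ioo (hh : ContinuousOn h (Ioo a b))
    (hc : c ∈ Ioo a b) {t : ℝ} (ht : t ∈ Ioo a b) :
    HasDerivAt (fun t => ∫ x in c..t, h x) (h t) t :=
  integral_hasDerivAt_right (hh.intervalIntegrable_of_mem_Ioo hc ht)
    (hh.stronglyMeasurableAtFilter isOpen_Ioo t ht) (hh.continuousAt (isOpen_Ioo.mem_nhds ht))

theorem contDiffOn_primitive_of_contDiffOn_Ioo (hh : ContDiffOn ℝ (⊤ : ℕ∞) h (Ioo a b))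
    (hc : c ∈ Ioo a b) : ContDiffOn ℝ (⊤ : ℕ∞) (fun t => ∫ x in c..t, h x) (Ioo a b) := by
  have hder := fun t (ht : t ∈ Ioo a b) =>
    hasDerivAt_primitive_of_continuousOn_Ioo hh.continuousOn hc ht
  rw [contDiffOn_infty_iff_deriv_of_isOpen isOpen_Ioo]
  exact ⟨fun t ht => (hder t ht).differentiableAt.differentiableWithinAt,
    hh.congr fun t ht => (hder t ht).deriv⟩

end Primitive

section Characteristics

noncomputable def charMinus (s y : ℝ) : ℝ := -1 + Real.exp (-s) * (1 + y)

noncomputable def charPlus (s y : ℝ) : ℝ := 1 - Real.exp (-s) * (1 - y)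

@[simp] theorem charMinus_zero (y : ℝ) : charMinus 0 y = y := by simp [charMinus]

@[simp] theorem charPlus_zero (y : ℝ) : charPlus 0 y = y := by simp [charPlus]

theorem continuous_charMinus : Continuous fun p : ℝ × ℝ => charMinus p.1 p.2 := by
  unfold charMinus; fun_prop

theorem continuous_charPlus : Continuous fun p : ℝ × ℝ => charPlus p.1 p.2 := by
  unfold charPlus; fun_prop

theorem contDiff_charMinus {n : WithTop ℕ∞} : ContDiff ℝ n fun p : ℝ × ℝ => charMinus p.1 p.2 := by
  unfold charMinus; fun_prop

theorem contDiff_charPlus {n : WithTop ℕ∞} : ContDiff ℝ n fun p : ℝ × ℝ => charPlus p.1 p.2 := by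
  unfold charPlus; fun_prop

def charDomain (U : Set ℝ) : Set (ℝ × ℝ) :=
  {p | charMinus p.1 p.2 ∈ U ∧ charPlus p.1 p.2 ∈ U}

theorem IsOpen.charDomain {U : Set ℝ} (hU : IsOpen U) : IsOpen (charDomain U) :=
  (hU.preimage continuous_charMinus).inter (hU.preimage continuous_charPlus)

theorem Ici_prod_Ioo_subset_charDomain :
    Ici (0 : ℝ) ×ˢ Ioo (-1 : ℝ) 1 ⊆ charDomain (Ioo (-1) 1) := by
  rintro ⟨s, y⟩ ⟨hs, hy₁, hy₂⟩
  have he : 0 < Real.exp (-s) := Real.exp_pos _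
  have he₁ : Real.exp (-s) ≤ 1 := Real.exp_le_one_iff.mpr (by simpa using hs)
  refine ⟨⟨?_, ?_⟩, ?_, ?_⟩ <;> simp only [charMinus, charPlus] <;> nlinarith

theorem hasDerivAt_charMinus_fst (s y : ℝ) :
    HasDerivAt (fun s' => charMinus s' y) (-(1 + charMinus s y)) s :=
  ((((hasDerivAt_neg s).exp).mul_const (1 + y)).const_add (-1)).congr_deriv
    (by simp only [charMinus]; ring)

theorem hasDerivAt_charPlus_fst (s y : ℝ) :
    HasDerivAt (fun s' => charPlus s' y) (1 - charPlus s y) s :=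
  ((((hasDerivAt_neg s).exp).mul_const (1 - y)).const_sub 1).congr_deriv
    (by simp only [charPlus]; ring)

theorem hasDerivAt_charMinus_snd (s y : ℝ) :
    HasDerivAt (fun y' => charMinus s y') (Real.exp (-s)) y :=
  ((((hasDerivAt_id y).const_add 1).const_mul (Real.exp (-s))).const_add (-1)).congr_deriv
    (by simp)

theorem hasDerivAt_charPlus_snd (s y : ℝ) :
    HasDerivAt (fun y' => charPlus s y') (Real.exp (-s)) y :=
  ((((hasDerivAt_id y).const_sub 1).const_mul (Real.exp (-s))).const_sub 1).congr_deriv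
    (by simp)

end Characteristics

section DAlembert

noncomputable def dAlembert (F G : ℝ → ℂ) (s y : ℝ) : ℂ := F (charMinus s y) + G (charPlus s y)

variable {F G : ℝ → ℂ} {F' G' : ℂ} {s y : ℝ}

theorem hasDerivAt_dAlembert_fst (hF : HasDerivAt F F' (charMinus s y))
    (hG : HasDerivAt G G' (charPlus s y)) :
    HasDerivAt (fun s' => dAlembert F G s' y)
      (-(1 + (charMinus s y : ℂ)) * F' + (1 - (charPlus s y : ℂ)) * G') s := by
  have := (hF.scomp s (hasDerivAt_charMinus_fst s y)).add
    (hG.scomp s (hasDerivAt_charPlus_fst s y))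
  refine this.congr_deriv ?_
  simp only [Complex.real_smul]
  push_cast
  ring

theorem hasDerivAt_dAlembert_snd (hF : HasDerivAt F F' (charMinus s y))
    (hG : HasDerivAt G G' (charPlus s y)) :
    HasDerivAt (fun y' => dAlembert F G s y') (Real.exp (-s) * (F' + G')) y := by
  have := (hF.scomp y (hasDerivAt_charMinus_snd s y)).add
    (hG.scomp y (hasDerivAt_charPlus_snd s y))
  refine this.congr_deriv ?_
  simp only [Complex.real_smul]
  ring

theorem contDiffOn_dAlembert {n : WithTop ℕ∞} {U : Set ℝ} (hF : ContDiffOn ℝ n F U)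
    (hG : ContDiffOn ℝ n G U) :
    ContDiffOn ℝ n (fun p : ℝ × ℝ => dAlembert F G p.1 p.2) (charDomain U) :=
  (hF.comp contDiff_charMinus.contDiffOn fun _ hp => hp.1).add
    (hG.comp contDiff_charPlus.contDiffOn fun _ hp => hp.2)

end DAlembert

section Congr

variable {u v : ℝ → ℝ → ℂ} {s y : ℝ}

theorem dS_congr_of_eventuallyEq (h : ∀ᶠ p in 𝓝 (s, y), u p.1 p.2 = v p.1 p.2) :
    dS u s y = dS v s y :=
  EventuallyEq.deriv_eq (((by fun_prop : Continuous fun s' : ℝ => (s', y)).tendsto s).eventually h)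

theorem dY_congr_of_eventuallyEq (h : ∀ᶠ p in 𝓝 (s, y), u p.1 p.2 = v p.1 p.2) :
    dY u s y = dY v s y :=
  EventuallyEq.deriv_eq (((by fun_prop : Continuous fun y' : ℝ => (s, y')).tendsto y).eventually h)

theorem eventually_dS_eq (h : ∀ᶠ p in 𝓝 (s, y), u p.1 p.2 = v p.1 p.2) :
    ∀ᶠ p in 𝓝 (s, y), dS u p.1 p.2 = dS v p.1 p.2 :=
  h.eventually_nhds.mono fun _ hp => dS_congr_of_eventuallyEq hp

theorem eventually_dY_eq (h : ∀ᶠ p in 𝓝 (s, y), u p.1 p.2 = v p.1 p.2) :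
    ∀ᶠ p in 𝓝 (s, y), dY u p.1 p.2 = dY v p.1 p.2 :=
  h.eventually_nhds.mono fun _ hp => dY_congr_of_eventuallyEq hp

theorem waveOp_congr_of_eventuallyEq (h : ∀ᶠ p in 𝓝 (s, y), u p.1 p.2 = v p.1 p.2) :
    waveOp u s y = waveOp v s y := by
  rw [waveOp, waveOp, dS_congr_of_eventuallyEq (eventually_dS_eq h),
    dS_congr_of_eventuallyEq (eventually_dY_eq h), dY_congr_of_eventuallyEq (eventually_dY_eq h),
    dS_congr_of_eventuallyEq h, dY_congr_of_eventuallyEq h]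

end Congr

theorem waveOp_dAlembert {U : Set ℝ} (hU : IsOpen U) {F G : ℝ → ℂ} (hF : ContDiffOn ℝ 2 F U)
    (hG : ContDiffOn ℝ 2 G U) {s y : ℝ} (hp : (s, y) ∈ charDomain U) :
    waveOp (dAlembert F G) s y = 0 := by
  have hasDeriv {n : WithTop ℕ∞} {H : ℝ → ℂ} (hH : ContDiffOn ℝ n H U) (hn : n ≠ 0) {t : ℝ}
      (ht : t ∈ U) : HasDerivAt H (deriv H t) t :=
    ((hH.contDiffAt (hU.mem_nhds ht)).differentiableAt hn).hasDerivAt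
  have hF' : ContDiffOn ℝ 1 (deriv F) U := hF.deriv_of_isOpen hU (by norm_num)
  have hG' : ContDiffOn ℝ 1 (deriv G) U := hG.deriv_of_isOpen hU (by norm_num)
  set F₁ : ℝ → ℂ := fun t => -(1 + (t : ℂ)) * deriv F t
  set G₁ : ℝ → ℂ := fun t => (1 - (t : ℂ)) * deriv G t
  set v : ℝ → ℝ → ℂ := fun s y => Real.exp (-s) * dAlembert (deriv F) (deriv G) s y
  have near : ∀ᶠ p in 𝓝 (s, y), p ∈ charDomain U := hU.charDomain.mem_nhds hp
  have hS : ∀ᶠ p in 𝓝 (s, y), dS (dAlembert F G) p.1 p.2 = dAlembert F₁ G₁ p.1 p.2 :=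
    near.mono fun p hp => (hasDerivAt_dAlembert_fst (hasDeriv hF two_ne_zero hp.1)
      (hasDeriv hG two_ne_zero hp.2)).deriv
  have hY : ∀ᶠ p in 𝓝 (s, y), dY (dAlembert F G) p.1 p.2 = v p.1 p.2 :=
    near.mono fun p hp => (hasDerivAt_dAlembert_snd (hasDeriv hF two_ne_zero hp.1)
      (hasDeriv hG two_ne_zero hp.2)).deriv
  obtain ⟨ha, hb⟩ : charMinus s y ∈ U ∧ charPlus s y ∈ U := hp
  set a := charMinus s y
  set b := charPlus s y
  have hF₂ := hasDeriv hF' one_ne_zero ha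
  have hG₂ := hasDeriv hG' one_ne_zero hb
  have hF₁ : HasDerivAt F₁ (-deriv F a - (1 + a) * deriv (deriv F) a) a :=
    ((((hasDerivAt_id a).ofReal_comp.const_add 1).neg).mul hF₂).congr_deriv
      (by simp only [Pi.neg_apply, id, Complex.ofReal_one]; ring)
  have hG₁ : HasDerivAt G₁ (-deriv G b + (1 - b) * deriv (deriv G) b) b :=
    (((hasDerivAt_id b).ofReal_comp.const_sub 1).mul hG₂).congr_deriv
      (by simp only [id, Complex.ofReal_one]; ring)
  have hSY : HasDerivAt (fun s' => v s' y) (-Real.exp (-s) * dAlembert (deriv F) (deriv G) s y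
      + Real.exp (-s) * (-(1 + (a : ℂ)) * deriv (deriv F) a + (1 - (b : ℂ)) * deriv (deriv G) b))
      s :=
    ((hasDerivAt_neg s).exp.ofReal_comp.mul (hasDerivAt_dAlembert_fst hF₂ hG₂)).congr_deriv
      (by push_cast; ring)
  rw [waveOp, dS_congr_of_eventuallyEq hS, dS_congr_of_eventuallyEq hY,
    dY_congr_of_eventuallyEq hY, hS.self_of_nhds, hY.self_of_nhds, dS,
    (hasDerivAt_dAlembert_fst hF₁ hG₁).deriv, dS, hSY.deriv, dY,
    ((hasDerivAt_dAlembert_snd hF₂ hG₂).const_mul _).deriv]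
  simp only [v, F₁, G₁, dAlembert, a, b, charMinus, charPlus]
  push_cast
  ring

section Profiles

noncomputable def leftWave (f g : ℝ → ℂ) (t : ℝ) : ℂ :=
  (f 0 + ∫ x in (0 : ℝ)..t, ((1 - (x : ℂ)) * deriv f x - g x)) / 2

noncomputable def rightWave (f g : ℝ → ℂ) (t : ℝ) : ℂ :=
  (f 0 + ∫ x in (0 : ℝ)..t, ((1 + (x : ℂ)) * deriv f x + g x)) / 2

variable {f g : ℝ → ℂ}

theorem ufg_eq_dAlembert (hf' : ContinuousOn (deriv f) (Ioo (-1) 1))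
    (hg : ContinuousOn g (Ioo (-1) 1)) {s y : ℝ} (hp : (s, y) ∈ charDomain (Ioo (-1) 1)) :
    ufg f g s y = dAlembert (leftWave f g) (rightWave f g) s y := by
  obtain ⟨ha, hb⟩ := hp
  simp only [charMinus, charPlus] at ha hb
  have h0 : (0 : ℝ) ∈ Ioo (-1 : ℝ) 1 := by norm_num
  have hl : ContinuousOn (fun x : ℝ => (1 - (x : ℂ)) * deriv f x) (Ioo (-1) 1) := by fun_prop
  have hr : ContinuousOn (fun x : ℝ => (1 + (x : ℂ)) * deriv f x) (Ioo (-1) 1) := by fun_prop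
  simp only [ufg, dAlembert, leftWave, rightWave, charMinus, charPlus]
  rw [integral_symm 0, integral_sub (hl.intervalIntegrable_of_mem_Ioo h0 ha)
    (hg.intervalIntegrable_of_mem_Ioo h0 ha), integral_add (hr.intervalIntegrable_of_mem_Ioo h0 hb)
    (hg.intervalIntegrable_of_mem_Ioo h0 hb), ← integral_interval_sub_left
    (hg.intervalIntegrable_of_mem_Ioo h0 hb) (hg.intervalIntegrable_of_mem_Ioo h0 ha)]
  ring

theorem leftWave_add_rightWave (hf : DifferentiableOn ℝ f (Ioo (-1) 1))
    (hf' : ContinuousOn (deriv f) (Ioo (-1) 1)) (hg : ContinuousOn g (Ioo (-1) 1)) {y : ℝ}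
    (hy : y ∈ Ioo (-1) 1) : leftWave f g y + rightWave f g y = f y := by
  have h0 : (0 : ℝ) ∈ Ioo (-1 : ℝ) 1 := by norm_num
  have hl : ContinuousOn (fun x : ℝ => (1 - (x : ℂ)) * deriv f x - g x) (Ioo (-1) 1) := by
    fun_prop
  have hr : ContinuousOn (fun x : ℝ => (1 + (x : ℂ)) * deriv f x + g x) (Ioo (-1) 1) := by
    fun_prop
  have hsum : (∫ x in (0 : ℝ)..y, ((1 - (x : ℂ)) * deriv f x - g x))
      + (∫ x in (0 : ℝ)..y, ((1 + (x : ℂ)) * deriv f x + g x)) = 2 * (f y - f 0) := by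
    rw [← integral_add (hl.intervalIntegrable_of_mem_Ioo h0 hy)
      (hr.intervalIntegrable_of_mem_Ioo h0 hy),
      integral_congr (g := fun x => 2 * deriv f x) fun x _ => by ring,
      intervalIntegral.integral_const_mul,
      integral_deriv_eq_sub (fun x hx => hf.differentiableAt
        (isOpen_Ioo.mem_nhds (ordConnected_Ioo.uIcc_subset h0 hy hx)))
        (hf'.intervalIntegrable_of_mem_Ioo h0 hy)]
  rw [leftWave, rightWave]
  linear_combination hsum / 2

theorem hasDerivAt_leftWave (hf' : ContinuousOn (deriv f) (Ioo (-1) 1))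
    (hg : ContinuousOn g (Ioo (-1) 1)) {t : ℝ} (ht : t ∈ Ioo (-1) 1) :
    HasDerivAt (leftWave f g) (((1 - (t : ℂ)) * deriv f t - g t) / 2) t :=
  ((hasDerivAt_primitive_of_continuousOn_Ioo (by fun_prop) (by norm_num) ht).const_add
    (f 0)).div_const 2

theorem hasDerivAt_rightWave (hf' : ContinuousOn (deriv f) (Ioo (-1) 1))
    (hg : ContinuousOn g (Ioo (-1) 1)) {t : ℝ} (ht : t ∈ Ioo (-1) 1) :
    HasDerivAt (rightWave f g) (((1 + (t : ℂ)) * deriv f t + g t) / 2) t :=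
  ((hasDerivAt_primitive_of_continuousOn_Ioo (by fun_prop) (by norm_num) ht).const_add
    (f 0)).div_const 2

theorem contDiffOn_leftWave (hf' : ContDiffOn ℝ (⊤ : ℕ∞) (deriv f) (Ioo (-1) 1))
    (hg : ContDiffOn ℝ (⊤ : ℕ∞) g (Ioo (-1) 1)) :
    ContDiffOn ℝ (⊤ : ℕ∞) (leftWave f g) (Ioo (-1) 1) :=
  (contDiffOn_const.add (contDiffOn_primitive_of_contDiffOn_Ioo
    (((contDiff_const.sub Complex.ofRealCLM.contDiff).contDiffOn.mul hf').sub hg)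
    (by norm_num))).div_const 2

theorem contDiffOn_rightWave (hf' : ContDiffOn ℝ (⊤ : ℕ∞) (deriv f) (Ioo (-1) 1))
    (hg : ContDiffOn ℝ (⊤ : ℕ∞) g (Ioo (-1) 1)) :
    ContDiffOn ℝ (⊤ : ℕ∞) (rightWave f g) (Ioo (-1) 1) :=
  (contDiffOn_const.add (contDiffOn_primitive_of_contDiffOn_Ioo
    (((contDiff_const.add Complex.ofRealCLM.contDiff).contDiffOn.mul hf').add hg)
    (by norm_num))).div_const 2

theorem hasDerivAt_dAlembert_leftWave_rightWave_zero (hf' : ContinuousOn (deriv f) (Ioo (-1) 1))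
    (hg : ContinuousOn g (Ioo (-1) 1)) {y : ℝ} (hy : y ∈ Ioo (-1) 1) :
    HasDerivAt (fun s => dAlembert (leftWave f g) (rightWave f g) s y) (g y) 0 :=
  (hasDerivAt_dAlembert_fst (by rw [charMinus_zero]; exact hasDerivAt_leftWave hf' hg hy)
    (by rw [charPlus_zero]; exact hasDerivAt_rightWave hf' hg hy)).congr_deriv
    (by simp only [charMinus_zero, charPlus_zero]; ring)

end Profiles

/-- Existence (Lemma `lem:dAlembert`, existence part): for `f,g ∈ C^∞((-1,1))`, the
function `u_{f,g}` is smooth on `[0,∞)×(-1,1)`, attains the initial data `(f,g)`, and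
solves the hyperboloidal free wave equation on `(0,∞)×(-1,1)`. -/
theorem stmt2 (f g : ℝ → ℂ)
    (hf : ContDiffOn ℝ (⊤:ℕ∞) f (Ioo (-1:ℝ) 1))
    (hg : ContDiffOn ℝ (⊤:ℕ∞) g (Ioo (-1:ℝ) 1)) :
    ContDiffOn ℝ (⊤:ℕ∞) (fun p : ℝ × ℝ => ufg f g p.1 p.2) (Ici (0:ℝ) ×ˢ Ioo (-1:ℝ) 1) ∧
    (∀ y ∈ Ioo (-1:ℝ) 1, ufg f g 0 y = f y) ∧
    (∀ y ∈ Ioo (-1:ℝ) 1, derivWithin (fun s => ufg f g s y) (Ici (0:ℝ)) 0 = g y) ∧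
    (∀ s ∈ Ioi (0:ℝ), ∀ y ∈ Ioo (-1:ℝ) 1, waveOp (ufg f g) s y = 0) := by
  have hf' : ContDiffOn ℝ (⊤ : ℕ∞) (deriv f) (Ioo (-1) 1) := hf.deriv_of_isOpen isOpen_Ioo le_rfl
  have hL := contDiffOn_leftWave hf' hg
  have hR := contDiffOn_rightWave hf' hg
  have hu : ∀ p ∈ charDomain (Ioo (-1) 1),
      ufg f g p.1 p.2 = dAlembert (leftWave f g) (rightWave f g) p.1 p.2 :=
    fun _ hp => ufg_eq_dAlembert hf'.continuousOn hg.continuousOn hp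
  have hD {s y : ℝ} (hs : 0 ≤ s) (hy : y ∈ Ioo (-1 : ℝ) 1) : (s, y) ∈ charDomain (Ioo (-1) 1) :=
    Ici_prod_Ioo_subset_charDomain ⟨hs, hy⟩
  refine ⟨?_, fun y hy => ?_, fun y hy => ?_, fun s hs y hy => ?_⟩
  · exact ((contDiffOn_dAlembert hL hR).mono Ici_prod_Ioo_subset_charDomain).congr
      fun p hp => hu p (Ici_prod_Ioo_subset_charDomain hp)
  · rw [hu (0, y) (hD le_rfl hy), dAlembert, charMinus_zero, charPlus_zero]
    exact leftWave_add_rightWave (hf.differentiableOn (by simp)) hf'.continuousOn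
      hg.continuousOn hy
  · exact ((hasDerivAt_dAlembert_leftWave_rightWave_zero hf'.continuousOn hg.continuousOn
      hy).hasDerivWithinAt.congr (fun s hs => hu (s, y) (hD hs hy))
      (hu (0, y) (hD le_rfl hy))).derivWithin (uniqueDiffOn_Ici 0 0 self_mem_Ici)
  · have hp := hD (le_of_lt hs) hy
    rw [waveOp_congr_of_eventuallyEq (v := dAlembert (leftWave f g) (rightWave f g))
      (eventually_of_mem (isOpen_Ioo.charDomain.mem_nhds hp) hu)]
    exact waveOp_dAlembert isOpen_Ioo (hL.of_le (by norm_cast)) (hR.of_le (by norm_cast)) hp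
end

section
/- There exists a constant C > 0 such that for all f,g ∈ C^∞((−1,1)) with ‖(f,g)‖_H < ∞ and all s ≥ 0 one has ‖(u_{f,g}(s,·), ∂_s u_{f,g}(s,·))‖_H ≤ C ‖(f,g)‖_H. -/
/-!
Put `e = exp (-s)`. The feet `a = -1 + e (1 + y)` and `b = 1 - e (1 - y)` of the two
characteristics through `(s, y)` lie in `(-1, 1)`, and `u (s, y) = f 0 + Φ a + Ψ b` with
`Φ' = ((1 - x) f' - g) / 2` and `Ψ' = ((1 + x) f' + g) / 2`. Hence `∂_y u = e (Φ' a + Ψ' b)` and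
`∂_s u = -(1 + a) Φ' a + (1 - b) Ψ' b`; as `1 + a = e (1 + y)` and `1 - b = e (1 - y)`, both
`(1 - y²) |∂_y u|²` and `|∂_s u|²` are at most `4 e ((1 + a) |Φ' a|² + (1 - b) |Ψ' b|²)`.
The substitutions `x = a`, `x = b` have Jacobian `e`, which absorbs the factor `e`, and
`(1 + x) |Φ'|² + (1 - x) |Ψ'|²` is exactly half the energy density of the data. So the energy of
`u (s)` is at most four times that of the data.
-/

open MeasureTheory Set ENNReal

noncomputable def energySq (f g : ℝ → ℂ) : ℝ≥0∞ :=
  (∫⁻ y in Ioo (-1:ℝ) 1, ENNReal.ofReal ((1 - y^2) * ‖deriv f y‖^2)) +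
    ∫⁻ y in Ioo (-1:ℝ) 1, ENNReal.ofReal (‖g y‖^2)

lemma setLIntegral_ofReal_mul_comp_le {s t : Set ℝ} (hs : MeasurableSet s) {φ : ℝ → ℝ} {e : ℝ}
    (he : 0 < e) (hφ : ∀ y, HasDerivAt φ e y) (hmaps : MapsTo φ s t) (H : ℝ → ℝ≥0∞) :
    ∫⁻ y in s, ENNReal.ofReal e * H (φ y) ≤ ∫⁻ x in t, H x := by
  have hinj : InjOn φ s :=
    (strictMono_of_deriv_pos fun y => (hφ y).deriv ▸ he).injective.injOn
  calc ∫⁻ y in s, ENNReal.ofReal e * H (φ y) = ∫⁻ x in φ '' s, H x := by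
        rw [lintegral_image_eq_lintegral_abs_deriv_mul hs (f' := fun _ => e)
          (fun y _ => (hφ y).hasDerivWithinAt) hinj H, abs_of_pos he]
    _ ≤ ∫⁻ x in t, H x := lintegral_mono_set hmaps.image_subset

lemma hasDerivAt_integral_comp {E : Type*} [NormedAddCommGroup E] [NormedSpace ℝ E]
    [CompleteSpace E] {h : ℝ → E} {p q c : ℝ} (hh : ContinuousOn h (Ioo p q)) (hc : c ∈ Ioo p q)
    {φ : ℝ → ℝ} {φ' t : ℝ} (hφ : HasDerivAt φ φ' t) (hφt : φ t ∈ Ioo p q) :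
    HasDerivAt (fun t => ∫ x in c..φ t, h x) (φ' • h (φ t)) t :=
  (intervalIntegral.integral_hasDerivAt_right
    (hh.mono (ordConnected_Ioo.uIcc_subset hc hφt)).intervalIntegrable
    (hh.stronglyMeasurableAtFilter isOpen_Ioo _ hφt)
    (hh.continuousAt (isOpen_Ioo.mem_nhds hφt))).scomp t hφ

lemma norm_smul_add_smul_sq_le {E : Type*} [NormedAddCommGroup E] [NormedSpace ℝ E]
    (α β : ℝ) (z w : E) : ‖α • z + β • w‖ ^ 2 ≤ 2 * (α ^ 2 * ‖z‖ ^ 2 + β ^ 2 * ‖w‖ ^ 2) :=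
  calc ‖α • z + β • w‖ ^ 2 ≤ (|α| * ‖z‖ + |β| * ‖w‖) ^ 2 := by
        rw [← Real.norm_eq_abs, ← Real.norm_eq_abs, ← norm_smul, ← norm_smul]
        gcongr
        exact norm_add_le _ _
    _ ≤ 2 * ((|α| * ‖z‖) ^ 2 + (|β| * ‖w‖) ^ 2) := add_sq_le
    _ = 2 * (α ^ 2 * ‖z‖ ^ 2 + β ^ 2 * ‖w‖ ^ 2) := by simp only [mul_pow, sq_abs]

def footL (e y : ℝ) : ℝ := -1 + e * (1 + y)

def footR (e y : ℝ) : ℝ := 1 - e * (1 - y)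

lemma exp_neg_mem_Ioc {s : ℝ} (hs : 0 ≤ s) : Real.exp (-s) ∈ Ioc (0 : ℝ) 1 :=
  ⟨Real.exp_pos _, Real.exp_le_one_iff.mpr (neg_nonpos.mpr hs)⟩

lemma footL_mem_Ioo {e y : ℝ} (he : e ∈ Ioc (0 : ℝ) 1) (hy : y ∈ Ioo (-1 : ℝ) 1) :
    footL e y ∈ Ioo (-1 : ℝ) 1 := by
  obtain ⟨he0, he1⟩ := he
  obtain ⟨hy1, hy2⟩ := hy
  constructor <;> unfold footL <;> nlinarith

lemma footR_mem_Ioo {e y : ℝ} (he : e ∈ Ioc (0 : ℝ) 1) (hy : y ∈ Ioo (-1 : ℝ) 1) :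
    footR e y ∈ Ioo (-1 : ℝ) 1 := by
  obtain ⟨he0, he1⟩ := he
  obtain ⟨hy1, hy2⟩ := hy
  constructor <;> unfold footR <;> nlinarith

lemma hasDerivAt_footL (e y : ℝ) : HasDerivAt (footL e) e y := by
  have := (((hasDerivAt_id y).const_add 1).const_mul e).const_add (-1)
  rwa [mul_one] at this

lemma hasDerivAt_footR (e y : ℝ) : HasDerivAt (footR e) e y := by
  have := (((hasDerivAt_id y).const_sub 1).const_mul e).const_sub 1
  rwa [mul_neg_one, neg_neg] at this

lemma hasDerivAt_footL_exp_neg (s y : ℝ) :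
    HasDerivAt (fun s => footL (Real.exp (-s)) y) (-(1 + footL (Real.exp (-s)) y)) s := by
  have := (((Real.hasDerivAt_exp (-s)).comp s (hasDerivAt_neg s)).mul_const (1 + y)).const_add (-1)
  exact this.congr_deriv (by simp only [footL]; ring)

lemma hasDerivAt_footR_exp_neg (s y : ℝ) :
    HasDerivAt (fun s => footR (Real.exp (-s)) y) (1 - footR (Real.exp (-s)) y) s := by
  have := (((Real.hasDerivAt_exp (-s)).comp s (hasDerivAt_neg s)).mul_const (1 - y)).const_sub 1
  exact this.congr_deriv (by simp only [footR]; ring)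

noncomputable def waveL (f g : ℝ → ℂ) (x : ℝ) : ℂ := (1 / 2) * ((1 - (x : ℂ)) * deriv f x - g x)

noncomputable def waveR (f g : ℝ → ℂ) (x : ℝ) : ℂ := (1 / 2) * ((1 + (x : ℂ)) * deriv f x + g x)

lemma energy_density_waveL_add_waveR (f g : ℝ → ℂ) (x : ℝ) :
    (1 + x) * ‖waveL f g x‖ ^ 2 + (1 - x) * ‖waveR f g x‖ ^ 2
      = ((1 - x ^ 2) * ‖deriv f x‖ ^ 2 + ‖g x‖ ^ 2) / 2 := by
  simp only [waveL, waveR, Complex.sq_norm, Complex.normSq_apply, Complex.mul_re, Complex.mul_im,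
    Complex.sub_re, Complex.sub_im, Complex.add_re, Complex.add_im, Complex.one_re, Complex.one_im,
    Complex.ofReal_re, Complex.ofReal_im, Complex.div_ofNat_re, Complex.div_ofNat_im]
  ring

section
variable {f g : ℝ → ℂ} (hf : ContinuousOn (deriv f) (Ioo (-1) 1))
  (hg : ContinuousOn g (Ioo (-1) 1))
include hf hg

lemma continuousOn_waveL : ContinuousOn (waveL f g) (Ioo (-1) 1) := by
  unfold waveL; fun_prop

lemma continuousOn_waveR : ContinuousOn (waveR f g) (Ioo (-1) 1) := by
  unfold waveR; fun_prop

lemma ufg_eq_add_integral_wave {s y : ℝ} (hs : 0 ≤ s) (hy : y ∈ Ioo (-1 : ℝ) 1) :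
    ufg f g s y = f 0 + (∫ x in 0..footL (Real.exp (-s)) y, waveL f g x)
      + ∫ x in 0..footR (Real.exp (-s)) y, waveR f g x := by
  have he := exp_neg_mem_Ioc hs
  have h0 : (0 : ℝ) ∈ Ioo (-1 : ℝ) 1 := by norm_num
  have integrable {h : ℝ → ℂ} (hh : ContinuousOn h (Ioo (-1) 1)) {a b : ℝ}
      (ha : a ∈ Ioo (-1 : ℝ) 1) (hb : b ∈ Ioo (-1 : ℝ) 1) : IntervalIntegrable h volume a b :=
    (hh.mono (ordConnected_Ioo.uIcc_subset ha hb)).intervalIntegrable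
  have hL := footL_mem_Ioo he hy
  have hR := footR_mem_Ioo he hy
  have hfL : ContinuousOn (fun x : ℝ => (1 - (x : ℂ)) * deriv f x) (Ioo (-1) 1) := by fun_prop
  have hfR : ContinuousOn (fun x : ℝ => (1 + (x : ℂ)) * deriv f x) (Ioo (-1) 1) := by fun_prop
  simp only [footL, footR] at hL hR ⊢
  rw [ufg, ← intervalIntegral.integral_add_adjacent_intervals (integrable hg hL h0)
    (integrable hg h0 hR)]
  simp only [waveL, waveR, intervalIntegral.integral_const_mul,
    intervalIntegral.integral_sub (integrable hfL h0 hL) (integrable hg h0 hL),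
    intervalIntegral.integral_add (integrable hfR h0 hR) (integrable hg h0 hR)]
  rw [intervalIntegral.integral_symm 0, intervalIntegral.integral_symm 0 (-1 + _)]
  ring

lemma hasDerivAt_ufg_space {s y : ℝ} (hs : 0 ≤ s) (hy : y ∈ Ioo (-1 : ℝ) 1) :
    HasDerivAt (fun y => ufg f g s y)
      (Real.exp (-s) • waveL f g (footL (Real.exp (-s)) y)
        + Real.exp (-s) • waveR f g (footR (Real.exp (-s)) y)) y := by
  have he := exp_neg_mem_Ioc hs
  have hrep : (fun y => ufg f g s y) =ᶠ[nhds y] fun y => f 0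
      + (∫ x in 0..footL (Real.exp (-s)) y, waveL f g x)
      + ∫ x in 0..footR (Real.exp (-s)) y, waveR f g x :=
    Filter.eventually_of_mem (isOpen_Ioo.mem_nhds hy)
      fun y' hy' => ufg_eq_add_integral_wave hf hg hs hy'
  have h0 : (0 : ℝ) ∈ Ioo (-1 : ℝ) 1 := by norm_num
  have hderiv := ((hasDerivAt_const y (f 0)).add
    (hasDerivAt_integral_comp (continuousOn_waveL hf hg) h0 (hasDerivAt_footL _ y)
      (footL_mem_Ioo he hy))).add
    (hasDerivAt_integral_comp (continuousOn_waveR hf hg) h0 (hasDerivAt_footR _ y)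
      (footR_mem_Ioo he hy))
  rw [zero_add] at hderiv
  exact hderiv.congr_of_eventuallyEq hrep

lemma hasDerivWithinAt_ufg_time {s y : ℝ} (hs : 0 ≤ s) (hy : y ∈ Ioo (-1 : ℝ) 1) :
    HasDerivWithinAt (fun s => ufg f g s y)
      ((-(1 + footL (Real.exp (-s)) y)) • waveL f g (footL (Real.exp (-s)) y)
        + (1 - footR (Real.exp (-s)) y) • waveR f g (footR (Real.exp (-s)) y)) (Ici 0) s := by
  have he := exp_neg_mem_Ioc hs
  have h0 : (0 : ℝ) ∈ Ioo (-1 : ℝ) 1 := by norm_num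
  have hderiv := ((hasDerivAt_const s (f 0)).add
    (hasDerivAt_integral_comp (continuousOn_waveL hf hg) h0 (hasDerivAt_footL_exp_neg s y)
      (footL_mem_Ioo he hy))).add
    (hasDerivAt_integral_comp (continuousOn_waveR hf hg) h0 (hasDerivAt_footR_exp_neg s y)
      (footR_mem_Ioo he hy))
  rw [zero_add] at hderiv
  exact hderiv.hasDerivWithinAt.congr (fun s' hs' => ufg_eq_add_integral_wave hf hg hs' hy)
    (ufg_eq_add_integral_wave hf hg hs hy)

end

section
variable {E : Type*} [NormedAddCommGroup E] [NormedSpace ℝ E] {e y : ℝ}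

lemma energy_density_space_le (hy : y ∈ Icc (-1 : ℝ) 1) (z w : E) :
    (1 - y ^ 2) * ‖e • z + e • w‖ ^ 2
      ≤ 4 * (e * ((1 + footL e y) * ‖z‖ ^ 2) + e * ((1 - footR e y) * ‖w‖ ^ 2)) := by
  obtain ⟨hy1, hy2⟩ := hy
  have hy' : 0 ≤ 1 - y ^ 2 := by nlinarith
  calc (1 - y ^ 2) * ‖e • z + e • w‖ ^ 2
      ≤ (1 - y ^ 2) * (2 * (e ^ 2 * ‖z‖ ^ 2 + e ^ 2 * ‖w‖ ^ 2)) := by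
        gcongr; exact norm_smul_add_smul_sq_le e e z w
    _ ≤ _ := by
        simp only [footL, footR]
        nlinarith [mul_nonneg (mul_nonneg (sq_nonneg e) (sq_nonneg (1 + y))) (sq_nonneg ‖z‖),
          mul_nonneg (mul_nonneg (sq_nonneg e) (sq_nonneg (1 - y))) (sq_nonneg ‖w‖)]

lemma energy_density_time_le (hy : y ∈ Icc (-1 : ℝ) 1) (z w : E) :
    ‖(-(1 + footL e y)) • z + (1 - footR e y) • w‖ ^ 2
      ≤ 4 * (e * ((1 + footL e y) * ‖z‖ ^ 2) + e * ((1 - footR e y) * ‖w‖ ^ 2)) := by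
  obtain ⟨hy1, hy2⟩ := hy
  have hyy : 0 ≤ (1 + y) * (1 - y) := mul_nonneg (by linarith) (by linarith)
  calc ‖(-(1 + footL e y)) • z + (1 - footR e y) • w‖ ^ 2
      ≤ 2 * ((-(1 + footL e y)) ^ 2 * ‖z‖ ^ 2 + (1 - footR e y) ^ 2 * ‖w‖ ^ 2) :=
        norm_smul_add_smul_sq_le _ _ z w
    _ ≤ _ := by
        simp only [footL, footR]
        nlinarith [mul_nonneg (mul_nonneg (sq_nonneg e) hyy) (sq_nonneg ‖z‖),
          mul_nonneg (mul_nonneg (sq_nonneg e) hyy) (sq_nonneg ‖w‖)]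

end

lemma ofReal_le_four_mul_add {X e P Q : ℝ} (he : 0 ≤ e) (hP : 0 ≤ P) (hQ : 0 ≤ Q)
    (h : X ≤ 4 * (e * P + e * Q)) :
    ENNReal.ofReal X
      ≤ 4 * (ENNReal.ofReal e * ENNReal.ofReal P + ENNReal.ofReal e * ENNReal.ofReal Q) := by
  rw [← ofReal_mul he, ← ofReal_mul he, ← ofReal_add (by positivity) (by positivity),
    ← ofReal_ofNat 4, ← ofReal_mul (by norm_num)]
  exact ofReal_le_ofReal h

lemma lintegral_waveL_add_lintegral_waveR_le (f g : ℝ → ℂ) :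
    (∫⁻ x in Ioo (-1 : ℝ) 1, ENNReal.ofReal ((1 + x) * ‖waveL f g x‖ ^ 2))
      + ∫⁻ x in Ioo (-1 : ℝ) 1, ENNReal.ofReal ((1 - x) * ‖waveR f g x‖ ^ 2)
      ≤ 2⁻¹ * energySq f g := by
  have hdensity : ∀ x ∈ Ioo (-1 : ℝ) 1,
      ENNReal.ofReal ((1 + x) * ‖waveL f g x‖ ^ 2) + ENNReal.ofReal ((1 - x) * ‖waveR f g x‖ ^ 2)
        = 2⁻¹ * (ENNReal.ofReal ((1 - x ^ 2) * ‖deriv f x‖ ^ 2) + ENNReal.ofReal (‖g x‖ ^ 2)) := by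
    rintro x ⟨hx1, hx2⟩
    have hx : 0 ≤ 1 - x ^ 2 := by nlinarith
    rw [← ofReal_add (mul_nonneg (by linarith) (sq_nonneg _))
        (mul_nonneg (by linarith) (sq_nonneg _)), energy_density_waveL_add_waveR,
      ← ofReal_add (by positivity) (by positivity),
      ofReal_div_of_pos two_pos, ofReal_ofNat, ENNReal.div_eq_inv_mul]
  have hmeas : Measurable fun x : ℝ => ENNReal.ofReal ((1 - x ^ 2) * ‖deriv f x‖ ^ 2) := by
    fun_prop
  calc _ ≤ ∫⁻ x in Ioo (-1 : ℝ) 1, (ENNReal.ofReal ((1 + x) * ‖waveL f g x‖ ^ 2)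
          + ENNReal.ofReal ((1 - x) * ‖waveR f g x‖ ^ 2)) := le_lintegral_add _ _
    _ = ∫⁻ x in Ioo (-1 : ℝ) 1, 2⁻¹ * (ENNReal.ofReal ((1 - x ^ 2) * ‖deriv f x‖ ^ 2)
          + ENNReal.ofReal (‖g x‖ ^ 2)) := setLIntegral_congr_fun measurableSet_Ioo hdensity
    _ = 2⁻¹ * energySq f g := by
        rw [lintegral_const_mul' _ _ (by simp), lintegral_add_left hmeas, energySq]

lemma lintegral_wave_comp_foot_le {f g : ℝ → ℂ} (hf : ContinuousOn (deriv f) (Ioo (-1) 1))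
    (hg : ContinuousOn g (Ioo (-1) 1)) {e : ℝ} (he : e ∈ Ioc (0 : ℝ) 1) :
    ∫⁻ y in Ioo (-1 : ℝ) 1,
        (ENNReal.ofReal e * ENNReal.ofReal ((1 + footL e y) * ‖waveL f g (footL e y)‖ ^ 2)
          + ENNReal.ofReal e * ENNReal.ofReal ((1 - footR e y) * ‖waveR f g (footR e y)‖ ^ 2))
      ≤ 2⁻¹ * energySq f g := by
  set HL : ℝ → ℝ≥0∞ := fun x => ENNReal.ofReal ((1 + x) * ‖waveL f g x‖ ^ 2)
  set HR : ℝ → ℝ≥0∞ := fun x => ENNReal.ofReal ((1 - x) * ‖waveR f g x‖ ^ 2)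
  have hmeas : AEMeasurable (fun y => ENNReal.ofReal e * HL (footL e y))
      (volume.restrict (Ioo (-1) 1)) := by
    have hfoot : Continuous (footL e) := by unfold footL; fun_prop
    have hwave := (continuousOn_waveL hf hg).comp hfoot.continuousOn
      fun y hy => footL_mem_Ioo he hy
    refine (ContinuousOn.aemeasurable ?_ measurableSet_Ioo).const_mul _
    exact continuous_ofReal.comp_continuousOn
      ((continuous_const.add hfoot).continuousOn.mul (hwave.norm.pow 2))
  calc _ = (∫⁻ y in Ioo (-1 : ℝ) 1, ENNReal.ofReal e * HL (footL e y))
        + ∫⁻ y in Ioo (-1 : ℝ) 1, ENNReal.ofReal e * HR (footR e y) :=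
        lintegral_add_left' hmeas _
    _ ≤ (∫⁻ x in Ioo (-1 : ℝ) 1, HL x) + ∫⁻ x in Ioo (-1 : ℝ) 1, HR x :=
        add_le_add
          (setLIntegral_ofReal_mul_comp_le measurableSet_Ioo he.1 (hasDerivAt_footL e)
            (fun y hy => footL_mem_Ioo he hy) HL)
          (setLIntegral_ofReal_mul_comp_le measurableSet_Ioo he.1 (hasDerivAt_footR e)
            (fun y hy => footR_mem_Ioo he hy) HR)
    _ ≤ 2⁻¹ * energySq f g := lintegral_waveL_add_lintegral_waveR_le f g

theorem energySq_ufg_le {f g : ℝ → ℂ} (hf : ContinuousOn (deriv f) (Ioo (-1) 1))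
    (hg : ContinuousOn g (Ioo (-1) 1)) {s : ℝ} (hs : 0 ≤ s) :
    energySq (fun y => ufg f g s y) (fun y => derivWithin (fun s' => ufg f g s' y) (Ici 0) s)
      ≤ 4 * energySq f g := by
  set e := Real.exp (-s)
  have he : e ∈ Ioc (0 : ℝ) 1 := exp_neg_mem_Ioc hs
  set D : ℝ → ℝ≥0∞ := fun y =>
    ENNReal.ofReal e * ENNReal.ofReal ((1 + footL e y) * ‖waveL f g (footL e y)‖ ^ 2)
      + ENNReal.ofReal e * ENNReal.ofReal ((1 - footR e y) * ‖waveR f g (footR e y)‖ ^ 2)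
  have hL : ∀ y ∈ Ioo (-1 : ℝ) 1, 0 ≤ (1 + footL e y) * ‖waveL f g (footL e y)‖ ^ 2 :=
    fun y hy => mul_nonneg (by linarith [(footL_mem_Ioo he hy).1]) (sq_nonneg _)
  have hR : ∀ y ∈ Ioo (-1 : ℝ) 1, 0 ≤ (1 - footR e y) * ‖waveR f g (footR e y)‖ ^ 2 :=
    fun y hy => mul_nonneg (by linarith [(footR_mem_Ioo he hy).2]) (sq_nonneg _)
  have hspace : ∀ y ∈ Ioo (-1 : ℝ) 1,
      ENNReal.ofReal ((1 - y ^ 2) * ‖deriv (fun y => ufg f g s y) y‖ ^ 2) ≤ 4 * D y := by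
    intro y hy
    rw [(hasDerivAt_ufg_space hf hg hs hy).deriv]
    exact ofReal_le_four_mul_add he.1.le (hL y hy) (hR y hy)
      (energy_density_space_le (Ioo_subset_Icc_self hy) _ _)
  have htime : ∀ y ∈ Ioo (-1 : ℝ) 1,
      ENNReal.ofReal (‖derivWithin (fun s' => ufg f g s' y) (Ici 0) s‖ ^ 2) ≤ 4 * D y := by
    intro y hy
    rw [(hasDerivWithinAt_ufg_time hf hg hs hy).derivWithin (uniqueDiffOn_Ici 0 s hs)]
    exact ofReal_le_four_mul_add he.1.le (hL y hy) (hR y hy)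
      (energy_density_time_le (Ioo_subset_Icc_self hy) _ _)
  calc _ ≤ (∫⁻ y in Ioo (-1 : ℝ) 1, 4 * D y) + ∫⁻ y in Ioo (-1 : ℝ) 1, 4 * D y :=
        add_le_add (setLIntegral_mono' measurableSet_Ioo hspace)
          (setLIntegral_mono' measurableSet_Ioo htime)
    _ = 4 * (2 * ∫⁻ y in Ioo (-1 : ℝ) 1, D y) := by
        rw [lintegral_const_mul' _ _ (by simp)]; ring
    _ ≤ 4 * (2 * (2⁻¹ * energySq f g)) := by gcongr; exact lintegral_wave_comp_foot_le hf hg he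
    _ = 4 * energySq f g := by
        rw [← mul_assoc 2, ENNReal.mul_inv_cancel two_ne_zero ofNat_ne_top, one_mul]

/-- Boundedness of the energy (Lemma `lem:en0`): there is `C > 0` such that for all
smooth data `f,g` on `(-1,1)` with finite energy and all `s ≥ 0`,
`‖(u_{f,g}(s,·), ∂_s u_{f,g}(s,·))‖_H ≤ C ‖(f,g)‖_H`. -/
theorem stmt4 :
    ∃ C : ℝ, 0 < C ∧ ∀ f g : ℝ → ℂ,
      ContDiffOn ℝ (⊤:ℕ∞) f (Ioo (-1:ℝ) 1) →
      ContDiffOn ℝ (⊤:ℕ∞) g (Ioo (-1:ℝ) 1) →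
      energySq f g < ⊤ →
      ∀ s : ℝ, 0 ≤ s →
        (energySq (fun y => ufg f g s y)
            (fun y => derivWithin (fun s' => ufg f g s' y) (Ici (0:ℝ)) s)) ^ (1/2 : ℝ)
          ≤ ENNReal.ofReal C * (energySq f g) ^ (1/2 : ℝ) := by
  refine ⟨2, two_pos, fun f g hf hg _ s hs => ?_⟩
  have hE := energySq_ufg_le
    (hf.continuousOn_deriv_of_isOpen isOpen_Ioo (by exact_mod_cast le_top)) hg.continuousOn hs
  calc _ ≤ (2 ^ 2 * energySq f g) ^ (1 / 2 : ℝ) :=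
        rpow_le_rpow (hE.trans_eq (by norm_num)) (by norm_num)
    _ = ENNReal.ofReal 2 * energySq f g ^ (1 / 2 : ℝ) := by
        rw [mul_rpow_of_nonneg _ _ (by norm_num), one_div,
          show ((2 : ℝ≥0∞) ^ 2) ^ (2⁻¹ : ℝ) = 2 by
            exact_mod_cast pow_rpow_inv_natCast two_ne_zero 2,
          ofReal_ofNat]
end

section
/- For all odd pairs (f₁,f₂) with f₁,f₂ ∈ C^∞([−1,1]) complex-valued, one has Re[∫_{−1}^{1}(1−y²) f₂'(y) \overline{f₁'(y)} dy + ∫_{−1}^{1} ((1−y²)f₁''(y) − 2y f₁'(y) − 2y f₂'(y) − f₂(y)) \overline{f₂(y)} dy] = −|f₂(−1)|² − |f₂(1)|²; in particular this quantity is ≤ 0. -/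
/- Writing `w = 1 - y²`, one has `(w f₁')' = w f₁'' - 2y f₁'`, and pointwise
`Re[w f₂' f̄₁' + (w f₁'' - 2y f₁' - 2y f₂' - f₂) f̄₂] = (Re[w f₁' f̄₂] - y |f₂|²)'`,
because `w f₂' f̄₁' - w f₁' f̄₂'` and `y f₂ f̄₂' - y f₂' f̄₂` are purely imaginary. Hence the real
part of the pairing is the boundary term of `Re[w f₁' f̄₂] - y |f₂|²`; the weight `w` vanishes at
`±1`, leaving `-|f₂(1)|² - |f₂(-1)|²`. -/

open MeasureTheory Set Filter Topology ComplexConjugate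

lemma intervalIntegrable_of_eqOn_Ioo {E : Type*} [NormedAddCommGroup E] {a b : ℝ}
    {f g : ℝ → E} (hab : a ≤ b) (hg : ContinuousOn g (Icc a b)) (hfg : EqOn g f (Ioo a b)) :
    IntervalIntegrable f volume a b :=
  (hg.intervalIntegrable_of_Icc hab).congr_uIoo (by rwa [uIoo_of_le hab])

section DerivWithinIcc

variable {E : Type*} [NormedAddCommGroup E] [NormedSpace ℝ E] {a b y : ℝ} {f : ℝ → E}

lemma derivWithin_Icc_eventuallyEq_deriv (hy : y ∈ Ioo a b) :
    derivWithin f (Icc a b) =ᶠ[𝓝 y] deriv f :=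
  eventually_of_mem (Ioo_mem_nhds hy.1 hy.2) fun _ hz =>
    derivWithin_of_mem_nhds (Icc_mem_nhds hz.1 hz.2)

lemma derivWithin_Icc_eq_deriv (hy : y ∈ Ioo a b) : derivWithin f (Icc a b) y = deriv f y :=
  (derivWithin_Icc_eventuallyEq_deriv hy).eq_of_nhds

lemma derivWithin_derivWithin_Icc_eq_deriv_deriv (hy : y ∈ Ioo a b) :
    derivWithin (derivWithin f (Icc a b)) (Icc a b) y = deriv (deriv f) y := by
  rw [derivWithin_Icc_eq_deriv hy, (derivWithin_Icc_eventuallyEq_deriv hy).deriv_eq]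

lemma ContDiffOn.hasDerivAt_of_mem_Ioo {n : WithTop ℕ∞} (hf : ContDiffOn ℝ n f (Icc a b))
    (hn : n ≠ 0) (hy : y ∈ Ioo a b) : HasDerivAt f (deriv f y) y :=
  ((hf.contDiffAt (Icc_mem_nhds hy.1 hy.2)).differentiableAt hn).hasDerivAt

lemma ContDiffOn.hasDerivAt_derivWithin_of_mem_Ioo (hf : ContDiffOn ℝ 2 f (Icc a b))
    (hy : y ∈ Ioo a b) : HasDerivAt (derivWithin f (Icc a b)) (deriv (deriv f) y) y := by
  have h := (hf.derivWithin (uniqueDiffOn_Icc (hy.1.trans hy.2)) (m := 1)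
    (by norm_num)).hasDerivAt_of_mem_Ioo one_ne_zero hy
  rwa [← derivWithin_of_mem_nhds (Icc_mem_nhds hy.1 hy.2),
    derivWithin_derivWithin_Icc_eq_deriv_deriv hy] at h

end DerivWithinIcc

noncomputable def boundaryFlux (u v : ℝ → ℂ) (t : ℝ) : ℝ :=
  ((1 - (t:ℂ)^2) * u t * conj (v t) - t * v t * conj (v t)).re

lemma hasDerivAt_boundaryFlux {u v : ℝ → ℂ} {u' v' : ℂ} {y : ℝ}
    (hu : HasDerivAt u u' y) (hv : HasDerivAt v v' y) :
    HasDerivAt (boundaryFlux u v)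
      (((1 - (y:ℂ)^2) * v' * conj (u y)
        + ((1 - (y:ℂ)^2) * u' - 2 * y * u y - 2 * y * v' - v y) * conj (v y)).re) y := by
  have ht : HasDerivAt (fun t : ℝ => (t:ℂ)) 1 y := Complex.ofRealCLM.hasDerivAt
  have h := (((ht.pow 2).const_sub 1).mul hu).mul hv.star |>.sub ((ht.mul hv).mul hv.star)
  refine (Complex.reCLM.hasFDerivAt.comp_hasDerivAt y h).congr_deriv ?_
  simp [Complex.mul_re, ← Complex.ofReal_pow]
  ring

lemma boundaryFlux_one (u v : ℝ → ℂ) : boundaryFlux u v 1 = -‖v 1‖ ^ 2 := by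
  simp [boundaryFlux, Complex.sq_norm, Complex.normSq_apply]

lemma boundaryFlux_neg_one (u v : ℝ → ℂ) : boundaryFlux u v (-1) = ‖v (-1)‖ ^ 2 := by
  simp [boundaryFlux, Complex.sq_norm, Complex.normSq_apply]

section Pairing

variable {a b : ℝ} {f₁ f₂ : ℝ → ℂ}

/- `deriv` takes junk values at the endpoints, so integrability comes from agreement on `Ioo a b`
with the one-sided derivatives `derivWithin · (Icc a b)`, which are continuous up to the boundary. -/
lemma intervalIntegrable_weight_mul_deriv_mul_conj_deriv (hab : a < b)
    (hf₁ : ContDiffOn ℝ 1 f₁ (Icc a b)) (hf₂ : ContDiffOn ℝ 1 f₂ (Icc a b)) :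
    IntervalIntegrable (fun y : ℝ => (1 - (y:ℂ)^2) * deriv f₂ y * conj (deriv f₁ y))
      volume a b := by
  have hc₁ := hf₁.continuousOn_derivWithin (uniqueDiffOn_Icc hab) le_rfl
  have hc₂ := hf₂.continuousOn_derivWithin (uniqueDiffOn_Icc hab) le_rfl
  refine intervalIntegrable_of_eqOn_Ioo hab.le (g := fun y =>
      (1 - (y:ℂ)^2) * derivWithin f₂ (Icc a b) y * conj (derivWithin f₁ (Icc a b) y))
    (by fun_prop) fun y hy => ?_
  simp only [derivWithin_Icc_eq_deriv hy]

lemma intervalIntegrable_freeWave_mul_conj (hab : a < b)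
    (hf₁ : ContDiffOn ℝ 2 f₁ (Icc a b)) (hf₂ : ContDiffOn ℝ 1 f₂ (Icc a b)) :
    IntervalIntegrable (fun y : ℝ => ((1 - (y:ℂ)^2) * deriv (deriv f₁) y - 2 * y * deriv f₁ y
      - 2 * y * deriv f₂ y - f₂ y) * conj (f₂ y)) volume a b := by
  have hI := uniqueDiffOn_Icc hab
  have hg₁ : ContDiffOn ℝ 1 (derivWithin f₁ (Icc a b)) (Icc a b) :=
    hf₁.derivWithin hI (by norm_num)
  have hc₁ := hg₁.continuousOn
  have hc₁' := hg₁.continuousOn_derivWithin hI le_rfl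
  have hc₂ := hf₂.continuousOn
  have hc₂' := hf₂.continuousOn_derivWithin hI le_rfl
  refine intervalIntegrable_of_eqOn_Ioo hab.le (g := fun y =>
      ((1 - (y:ℂ)^2) * derivWithin (derivWithin f₁ (Icc a b)) (Icc a b) y
        - 2 * y * derivWithin f₁ (Icc a b) y - 2 * y * derivWithin f₂ (Icc a b) y - f₂ y)
        * conj (f₂ y))
    (by fun_prop) fun y hy => ?_
  simp only [derivWithin_derivWithin_Icc_eq_deriv_deriv hy, derivWithin_Icc_eq_deriv hy]

lemma re_pairing_eq_boundaryFlux_sub (hab : a < b)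
    (hf₁ : ContDiffOn ℝ 2 f₁ (Icc a b)) (hf₂ : ContDiffOn ℝ 1 f₂ (Icc a b)) :
    ((∫ y in a..b, (1 - (y:ℂ)^2) * deriv f₂ y * conj (deriv f₁ y)) +
      ∫ y in a..b, ((1 - (y:ℂ)^2) * deriv (deriv f₁) y - 2 * y * deriv f₁ y
        - 2 * y * deriv f₂ y - f₂ y) * conj (f₂ y)).re
      = boundaryFlux (derivWithin f₁ (Icc a b)) f₂ b
        - boundaryFlux (derivWithin f₁ (Icc a b)) f₂ a := by
  have hA := intervalIntegrable_weight_mul_deriv_mul_conj_deriv hab (hf₁.of_le (by norm_num)) hf₂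
  have hB := intervalIntegrable_freeWave_mul_conj hab hf₁ hf₂
  have hcont : ContinuousOn (boundaryFlux (derivWithin f₁ (Icc a b)) f₂) (Icc a b) := by
    have hc₁ := hf₁.continuousOn_derivWithin (uniqueDiffOn_Icc hab) (by norm_num)
    have hc₂ := hf₂.continuousOn
    unfold boundaryFlux
    fun_prop
  have hderiv : ∀ y ∈ Ioo a b, HasDerivAt (boundaryFlux (derivWithin f₁ (Icc a b)) f₂)
      ((1 - (y:ℂ)^2) * deriv f₂ y * conj (deriv f₁ y) + ((1 - (y:ℂ)^2) * deriv (deriv f₁) y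
        - 2 * y * deriv f₁ y - 2 * y * deriv f₂ y - f₂ y) * conj (f₂ y)).re y := by
    intro y hy
    have h := hasDerivAt_boundaryFlux (hf₁.hasDerivAt_derivWithin_of_mem_Ioo hy)
      (hf₂.hasDerivAt_of_mem_Ioo one_ne_zero hy)
    rwa [derivWithin_Icc_eq_deriv hy] at h
  have hAB := hA.add hB
  rw [← intervalIntegral.integral_add hA hB]
  exact (intervalIntegral.intervalIntegral_re hAB).symm.trans
    (intervalIntegral.integral_eq_sub_of_hasDerivAt_of_le hab.le hcont hderiv
      ⟨hAB.1.re, hAB.2.re⟩)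

end Pairing

theorem stmt10_general (f₁ f₂ : ℝ → ℂ)
    (hf₁ : ContDiffOn ℝ (⊤:ℕ∞) f₁ (Icc (-1:ℝ) 1))
    (hf₂ : ContDiffOn ℝ (⊤:ℕ∞) f₂ (Icc (-1:ℝ) 1)) :
    ((∫ y in (-1:ℝ)..1, (1 - (y:ℂ)^2) * deriv f₂ y * (starRingEnd ℂ) (deriv f₁ y)) +
      ∫ y in (-1:ℝ)..1,
        ((1 - (y:ℂ)^2) * deriv (deriv f₁) y - 2 * (y:ℂ) * deriv f₁ y
          - 2 * (y:ℂ) * deriv f₂ y - f₂ y) * (starRingEnd ℂ) (f₂ y)).re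
      = -‖f₂ (-1)‖^2 - ‖f₂ 1‖^2 ∧
    ((∫ y in (-1:ℝ)..1, (1 - (y:ℂ)^2) * deriv f₂ y * (starRingEnd ℂ) (deriv f₁ y)) +
      ∫ y in (-1:ℝ)..1,
        ((1 - (y:ℂ)^2) * deriv (deriv f₁) y - 2 * (y:ℂ) * deriv f₁ y
          - 2 * (y:ℂ) * deriv f₂ y - f₂ y) * (starRingEnd ℂ) (f₂ y)).re ≤ 0 := by
  rw [re_pairing_eq_boundaryFlux_sub (by norm_num) (hf₁.of_le ENat.LEInfty.out)
    (hf₂.of_le ENat.LEInfty.out), boundaryFlux_one, boundaryFlux_neg_one]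
  exact ⟨by ring, by linarith [sq_nonneg ‖f₂ (-1)‖, sq_nonneg ‖f₂ 1‖]⟩

/-- Dissipativity of the free generator (from the proof of Lemma `lem:S0`): for odd
smooth pairs `(f₁,f₂)` on `[-1,1]`,
`Re (𝔏₀(f₁,f₂) | (f₁,f₂))_H = −|f₂(−1)|² − |f₂(1)|² ≤ 0`. -/
theorem stmt10 (f₁ f₂ : ℝ → ℂ)
    (hf₁ : ContDiffOn ℝ (⊤:ℕ∞) f₁ (Icc (-1:ℝ) 1))
    (hf₂ : ContDiffOn ℝ (⊤:ℕ∞) f₂ (Icc (-1:ℝ) 1))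
    (hodd₁ : ∀ y ∈ Icc (-1:ℝ) 1, f₁ (-y) = - f₁ y)
    (hodd₂ : ∀ y ∈ Icc (-1:ℝ) 1, f₂ (-y) = - f₂ y) :
    ((∫ y in (-1:ℝ)..1, (1 - (y:ℂ)^2) * deriv f₂ y * (starRingEnd ℂ) (deriv f₁ y)) +
      ∫ y in (-1:ℝ)..1,
        ((1 - (y:ℂ)^2) * deriv (deriv f₁) y - 2 * (y:ℂ) * deriv f₁ y
          - 2 * (y:ℂ) * deriv f₂ y - f₂ y) * (starRingEnd ℂ) (f₂ y)).re
      = -‖f₂ (-1)‖^2 - ‖f₂ 1‖^2 ∧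
    ((∫ y in (-1:ℝ)..1, (1 - (y:ℂ)^2) * deriv f₂ y * (starRingEnd ℂ) (deriv f₁ y)) +
      ∫ y in (-1:ℝ)..1,
        ((1 - (y:ℂ)^2) * deriv (deriv f₁) y - 2 * (y:ℂ) * deriv f₁ y
          - 2 * (y:ℂ) * deriv f₂ y - f₂ y) * (starRingEnd ℂ) (f₂ y)).re ≤ 0 :=
  stmt10_general f₁ f₂ hf₁ hf₂
end

section
/- Let λ ∈ ℂ and define f₁(y) := (1+y)^{−λ} − (1−y)^{−λ} for y ∈ (−1,1) (principal branch powers) and f₂ := λ f₁. Then f₁ ∈ C^∞((−1,1)) and the pair (f₁,f₂) satisfies 𝔏₀(f₁,f₂) = λ(f₁,f₂) pointwise on (−1,1), i.e., f₂ = λ f₁ and (1−y²)f₁''(y) − 2y f₁'(y) − 2y f₂'(y) − f₂(y) = λ f₂(y) for all y ∈ (−1,1). Moreover, if Re λ < 0 then f₁ is not identically zero and ∫_{−1}^{1}(1−y²)|f₁'(y)|² dy + ∫_{−1}^{1}|λ f₁(y)|² dy < ∞. -/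
/-!
Each of `(1 ± y)^{−λ}` solves `(1−y²)f'' − 2(1+λ)y f' − λ(1+λ)f = 0`, the second-order form of
`𝔏₀(f, λf) = λ(f, λf)`: after factoring out `(1+y)^{−λ−2}` the check is the polynomial identity
`(1−y)(1+y) + 2y(1+y) − (1+y)² = 0`, and the equation is invariant under `y ↦ −y`.
For `Re λ < 0` the function `f₁` is bounded, and `(1−y²)|f₁'|² ≲ (1+y)^{−2Re λ−1} + (1−y)^{−2Re λ−1}`
is integrable because `−2Re λ−1 > −1`; `f₁ ≠ 0` since `|1+y|^{−Re λ} > |1−y|^{−Re λ}` for `y > 0`.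
-/

open MeasureTheory Set ENNReal

/-- The eigenfunction candidate `f₁(y) = (1+y)^{−λ} − (1−y)^{−λ}` (principal branch). -/
noncomputable def eigf (lam : ℂ) (y : ℝ) : ℂ :=
  (1 + (y:ℂ)) ^ (-lam) - (1 - (y:ℂ)) ^ (-lam)

section Powers

variable {y : ℝ}

lemma one_add_ofReal_eq (y : ℝ) : (1 : ℂ) + y = ((1 + y : ℝ) : ℂ) := by push_cast; rfl

lemma one_sub_ofReal_eq (y : ℝ) : (1 : ℂ) - y = ((1 - y : ℝ) : ℂ) := by push_cast; rfl

lemma one_add_ofReal_mem_slitPlane (hy : -1 < y) : (1 : ℂ) + y ∈ Complex.slitPlane := by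
  rw [one_add_ofReal_eq]
  exact Complex.ofReal_mem_slitPlane.2 (by linarith)

lemma one_sub_ofReal_mem_slitPlane (hy : y < 1) : (1 : ℂ) - y ∈ Complex.slitPlane := by
  rw [one_sub_ofReal_eq]
  exact Complex.ofReal_mem_slitPlane.2 (by linarith)

lemma norm_one_add_ofReal_cpow (c : ℂ) (hy : -1 < y) : ‖(1 + (y : ℂ)) ^ c‖ = (1 + y) ^ c.re := by
  rw [one_add_ofReal_eq, Complex.norm_cpow_eq_rpow_re_of_pos (by linarith)]

lemma norm_one_sub_ofReal_cpow (c : ℂ) (hy : y < 1) : ‖(1 - (y : ℂ)) ^ c‖ = (1 - y) ^ c.re := by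
  rw [one_sub_ofReal_eq, Complex.norm_cpow_eq_rpow_re_of_pos (by linarith)]

lemma hasDerivAt_one_add_ofReal_cpow (c : ℂ) (hy : -1 < y) :
    HasDerivAt (fun t : ℝ => (1 + (t : ℂ)) ^ c) (c * (1 + (y : ℂ)) ^ (c - 1)) y := by
  simpa using (((hasDerivAt_id (y : ℂ)).const_add 1).cpow_const
    (one_add_ofReal_mem_slitPlane hy) (c := c)).comp_ofReal

lemma hasDerivAt_one_sub_ofReal_cpow (c : ℂ) (hy : y < 1) :
    HasDerivAt (fun t : ℝ => (1 - (t : ℂ)) ^ c) (-(c * (1 - (y : ℂ)) ^ (c - 1))) y := by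
  simpa using (((hasDerivAt_id (y : ℂ)).const_sub 1).cpow_const
    (one_sub_ofReal_mem_slitPlane hy) (c := c)).comp_ofReal

lemma mul_rpow_sq {x : ℝ} (hx : 0 < x) (r : ℝ) : x * (x ^ r) ^ 2 = x ^ (2 * r + 1) := by
  rw [Real.rpow_add hx, Real.rpow_one, mul_comm 2 r, Real.rpow_mul hx.le, Real.rpow_two, mul_comm]

lemma integrableOn_one_add_rpow {s : ℝ} (hs : -1 < s) :
    IntegrableOn (fun y : ℝ => (1 + y) ^ s) (Ioo (-1) 1) := by
  have h := (intervalIntegral.intervalIntegrable_rpow' (a := 0) (b := 2) hs).comp_add_right 1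
  norm_num at h
  simpa [add_comm, intervalIntegrable_iff_integrableOn_Ioo_of_le] using h

lemma integrableOn_one_sub_rpow {s : ℝ} (hs : -1 < s) :
    IntegrableOn (fun y : ℝ => (1 - y) ^ s) (Ioo (-1) 1) := by
  have h := ((intervalIntegral.intervalIntegrable_rpow' (a := 0) (b := 2) hs).comp_sub_left 1).symm
  norm_num at h
  simpa [intervalIntegrable_iff_integrableOn_Ioo_of_le] using h

end Powers

lemma setLIntegral_ofReal_lt_top_of_le {α : Type*} [MeasurableSpace α] {μ : Measure α}
    {s : Set α} {f g : α → ℝ} (hs : MeasurableSet s) (hg : IntegrableOn g s μ)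
    (hfg : ∀ x ∈ s, f x ≤ g x) : ∫⁻ x in s, ENNReal.ofReal (f x) ∂μ < ⊤ :=
  (setLIntegral_mono' hs fun x hx => ENNReal.ofReal_le_ofReal (hfg x hx)).trans_lt
    hg.lintegral_lt_top

section Eigenfunction

variable {lam : ℂ} {y : ℝ}

lemma hasDerivAt_eigf (hy : y ∈ Ioo (-1 : ℝ) 1) :
    HasDerivAt (eigf lam) (-lam * ((1 + (y : ℂ)) ^ (-lam - 1) + (1 - (y : ℂ)) ^ (-lam - 1))) y :=
  ((hasDerivAt_one_add_ofReal_cpow (-lam) hy.1).sub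
    (hasDerivAt_one_sub_ofReal_cpow (-lam) hy.2)).congr_deriv (by ring)

lemma hasDerivAt_deriv_eigf (hy : y ∈ Ioo (-1 : ℝ) 1) :
    HasDerivAt (deriv (eigf lam))
      (lam * (lam + 1) * ((1 + (y : ℂ)) ^ (-lam - 2) - (1 - (y : ℂ)) ^ (-lam - 2))) y := by
  have hderiv : deriv (eigf lam) =ᶠ[nhds y] fun t : ℝ =>
      -lam * ((1 + (t : ℂ)) ^ (-lam - 1) + (1 - (t : ℂ)) ^ (-lam - 1)) :=
    Filter.eventuallyEq_of_mem (isOpen_Ioo.mem_nhds hy) fun t ht => (hasDerivAt_eigf ht).deriv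
  refine ((((hasDerivAt_one_add_ofReal_cpow (-lam - 1) hy.1).add
    (hasDerivAt_one_sub_ofReal_cpow (-lam - 1) hy.2)).const_mul (-lam)).congr_of_eventuallyEq
      hderiv).congr_deriv ?_
  rw [show -lam - 1 - 1 = -lam - 2 by ring]
  ring

lemma contDiffOn_eigf (lam : ℂ) (n : WithTop ℕ∞) : ContDiffOn ℝ n (eigf lam) (Ioo (-1) 1) := by
  intro y hy
  have hA : AnalyticAt ℂ (fun z : ℂ => (1 + z) ^ (-lam) - (1 - z) ^ (-lam)) y :=
    ((analyticAt_const.add analyticAt_id).cpow analyticAt_const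
      (one_add_ofReal_mem_slitPlane hy.1)).sub
    ((analyticAt_const.sub analyticAt_id).cpow analyticAt_const
      (one_sub_ofReal_mem_slitPlane hy.2))
  exact ((hA.contDiffAt.restrict_scalars ℝ).comp y
    Complex.ofRealCLM.contDiff.contDiffAt).contDiffWithinAt

lemma eigf_ode (hy : y ∈ Ioo (-1 : ℝ) 1) :
    (1 - (y : ℂ) ^ 2) * deriv (deriv (eigf lam)) y - 2 * (1 + lam) * y * deriv (eigf lam) y
      - lam * (1 + lam) * eigf lam y = 0 := by
  have ha : (1 : ℂ) + y ≠ 0 := Complex.slitPlane_ne_zero (one_add_ofReal_mem_slitPlane hy.1)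
  have hb : (1 : ℂ) - y ≠ 0 := Complex.slitPlane_ne_zero (one_sub_ofReal_mem_slitPlane hy.2)
  rw [(hasDerivAt_deriv_eigf hy).deriv, (hasDerivAt_eigf hy).deriv, eigf]
  simp only [Complex.cpow_sub _ _ ha, Complex.cpow_sub _ _ hb, Complex.cpow_one,
    Complex.cpow_two]
  field_simp
  ring

lemma eigf_ne_zero (hre : lam.re < 0) (hy : y ∈ Ioo (0 : ℝ) 1) : eigf lam y ≠ 0 := by
  rw [eigf, sub_ne_zero]
  intro h
  have hnorm := congrArg norm h
  rw [norm_one_add_ofReal_cpow _ (by linarith [hy.1]), norm_one_sub_ofReal_cpow _ hy.2] at hnorm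
  exact (Real.rpow_lt_rpow (by linarith [hy.2]) (by linarith [hy.1])
    (by simpa using hre)).ne' hnorm

lemma norm_eigf_le (hre : lam.re ≤ 0) (hy : y ∈ Ioo (-1 : ℝ) 1) :
    ‖eigf lam y‖ ≤ 2 * 2 ^ (-lam.re) := by
  have h1 : (1 + y) ^ (-lam.re) ≤ (2 : ℝ) ^ (-lam.re) :=
    Real.rpow_le_rpow (by linarith [hy.1]) (by linarith [hy.2]) (by linarith)
  have h2 : (1 - y) ^ (-lam.re) ≤ (2 : ℝ) ^ (-lam.re) :=
    Real.rpow_le_rpow (by linarith [hy.2]) (by linarith [hy.1]) (by linarith)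
  calc ‖eigf lam y‖ ≤ ‖(1 + (y : ℂ)) ^ (-lam)‖ + ‖(1 - (y : ℂ)) ^ (-lam)‖ := norm_sub_le _ _
    _ ≤ 2 ^ (-lam.re) + 2 ^ (-lam.re) := by
      rw [norm_one_add_ofReal_cpow _ hy.1, norm_one_sub_ofReal_cpow _ hy.2, Complex.neg_re]
      exact add_le_add h1 h2
    _ = 2 * 2 ^ (-lam.re) := by ring

lemma one_sub_sq_mul_norm_deriv_eigf_sq_le (hy : y ∈ Ioo (-1 : ℝ) 1) :
    (1 - y ^ 2) * ‖deriv (eigf lam) y‖ ^ 2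
      ≤ 4 * ‖lam‖ ^ 2 * ((1 + y) ^ (-2 * lam.re - 1) + (1 - y) ^ (-2 * lam.re - 1)) := by
  obtain ⟨h1, h2⟩ : 0 < 1 + y ∧ 0 < 1 - y := ⟨by linarith [hy.1], by linarith [hy.2]⟩
  set u := (1 + y) ^ (-lam.re - 1)
  set v := (1 - y) ^ (-lam.re - 1)
  have hD : ‖deriv (eigf lam) y‖ ≤ ‖lam‖ * (u + v) := by
    rw [(hasDerivAt_eigf hy).deriv, norm_mul, norm_neg]
    gcongr
    refine (norm_add_le _ _).trans_eq ?_
    rw [norm_one_add_ofReal_cpow _ hy.1, norm_one_sub_ofReal_cpow _ hy.2]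
    simp [u, v]
  have eu : (1 + y) * u ^ 2 = (1 + y) ^ (-2 * lam.re - 1) := by
    rw [mul_rpow_sq h1]; ring_nf
  have ev : (1 - y) * v ^ 2 = (1 - y) ^ (-2 * lam.re - 1) := by
    rw [mul_rpow_sq h2]; ring_nf
  have key : (1 - y ^ 2) * (u + v) ^ 2 ≤ 4 * ((1 + y) * u ^ 2 + (1 - y) * v ^ 2) := by
    nlinarith [mul_nonneg (mul_nonneg h1.le h2.le) (sq_nonneg (u - v)),
      mul_nonneg (sq_nonneg (1 + y)) (sq_nonneg u), mul_nonneg (sq_nonneg (1 - y)) (sq_nonneg v)]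
  calc (1 - y ^ 2) * ‖deriv (eigf lam) y‖ ^ 2 ≤ (1 - y ^ 2) * (‖lam‖ * (u + v)) ^ 2 := by
        gcongr
        nlinarith
    _ = ‖lam‖ ^ 2 * ((1 - y ^ 2) * (u + v) ^ 2) := by ring
    _ ≤ ‖lam‖ ^ 2 * (4 * ((1 + y) * u ^ 2 + (1 - y) * v ^ 2)) := by gcongr
    _ = _ := by rw [eu, ev]; ring

end Eigenfunction

/-- Eigenvalues of the free generator (Remark after Corollary `cor:specL0`): with
`f₁(y) = (1+y)^{−λ} − (1−y)^{−λ}` and `f₂ = λf₁`, the pair satisfies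
`𝔏₀(f₁,f₂) = λ(f₁,f₂)` on `(-1,1)`; moreover, for `Re λ < 0`, `f₁` is nontrivial and has
finite energy norm. -/
theorem stmt12 (lam : ℂ) :
    ContDiffOn ℝ (⊤:ℕ∞) (eigf lam) (Ioo (-1:ℝ) 1) ∧
    (∀ y ∈ Ioo (-1:ℝ) 1,
      (fun y' => lam * eigf lam y') y = lam * eigf lam y ∧
      (1 - (y:ℂ)^2) * deriv (deriv (eigf lam)) y - 2 * (y:ℂ) * deriv (eigf lam) y
        - 2 * (y:ℂ) * deriv (fun y' => lam * eigf lam y') y - lam * eigf lam y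
        = lam * (lam * eigf lam y)) ∧
    (lam.re < 0 →
      (∃ y ∈ Ioo (-1:ℝ) 1, eigf lam y ≠ 0) ∧
      ((∫⁻ y in Ioo (-1:ℝ) 1, ENNReal.ofReal ((1 - y^2) * ‖deriv (eigf lam) y‖^2)) +
        ∫⁻ y in Ioo (-1:ℝ) 1, ENNReal.ofReal (‖lam * eigf lam y‖^2)) < ⊤) := by
  refine ⟨contDiffOn_eigf lam _, fun y hy => ⟨rfl, ?_⟩, fun hre => ⟨?_, ?_⟩⟩
  · rw [deriv_const_mul _ (hasDerivAt_eigf hy).differentiableAt]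
    linear_combination eigf_ode hy
  · exact ⟨1 / 2, by norm_num, eigf_ne_zero hre (by norm_num)⟩
  have hs : -1 < -2 * lam.re - 1 := by linarith
  refine ENNReal.add_lt_top.2 ⟨?_, ?_⟩
  · exact setLIntegral_ofReal_lt_top_of_le measurableSet_Ioo
      (((integrableOn_one_add_rpow hs).add (integrableOn_one_sub_rpow hs)).const_mul _)
      fun y hy => one_sub_sq_mul_norm_deriv_eigf_sq_le hy
  · exact setLIntegral_ofReal_lt_top_of_le measurableSet_Ioo
      (integrableOn_const (C := ‖lam‖ ^ 2 * (2 * 2 ^ (-lam.re)) ^ 2) (by simp))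
      fun y hy => by
        rw [norm_mul, mul_pow]
        gcongr
        exact norm_eigf_le hre.le hy
end

section
/- Let λ ∈ ℂ with Re λ ≥ 0 and let f ∈ C^∞([−1,1]) be odd and satisfy −(1−y²)f''(y) + 2(λ+1)y f'(y) + λ(λ+1) f(y) − f(y) = 0 for all y ∈ (−1,1). Then f = 0. (In the notation of the paper: Σ_V = ∅ for the constant potential V(y) = −1.) -/
/-!
Put `μ = λ + 1`. Differentiating the equation shows that `g = f'` solves the same equation with
`λ` replaced by `μ`, where `Re μ ≥ 1` and hence `|μ| ≥ 1`. For such a solution the Lyapunov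
function `ψ(x) = Re (μ̄ (μ x |g|² - (1 - x²) g' ḡ))` has derivative
`Re μ ((1 - |μ|²) |g|² - (1 - x²) |g'|²) ≤ 0`, so `ψ` decreases on `[-1, 1]`. But
`ψ(1) = |μ|² |g(1)|² ≥ 0 ≥ -|μ|² |g(-1)|² = ψ(-1)`, which forces `ψ ≡ 0`, hence `g' = 0` inside
and `g(1) = 0`, so `g = 0`. Thus `f` is constant, and odd, so `f = 0`.
-/

open Set Filter Topology ComplexConjugate

section Calculus

variable {E : Type*} [NormedAddCommGroup E] [NormedSpace ℝ E]

theorem HasDerivAt.eq_zero_of_eqOn_zero {u : ℝ → E} {u' : E} {s : Set ℝ} {y : ℝ}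
    (h : HasDerivAt u u' y) (hs : IsOpen s) (hy : y ∈ s) (hu : EqOn u 0 s) : u' = 0 :=
  h.unique <| (hasDerivAt_const y 0).congr_of_eventuallyEq <|
    eventually_of_mem (hs.mem_nhds hy) hu

theorem exists_eqOn_const_Icc_of_hasDerivAt_zero {u : ℝ → E} {a b : ℝ} (hab : a < b)
    (hu : ContinuousOn u (Icc a b)) (hu' : ∀ y ∈ Ioo a b, HasDerivAt u 0 y) :
    ∃ c, EqOn u (fun _ ↦ c) (Icc a b) := by
  obtain ⟨c, hc⟩ := isOpen_Ioo.exists_is_const_of_deriv_eq_zero isPreconnected_Ioo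
    (fun y hy ↦ (hu' y hy).differentiableAt.differentiableWithinAt)
    (fun y hy ↦ (hu' y hy).deriv)
  exact ⟨c, EqOn.of_subset_closure hc hu continuousOn_const Ioo_subset_Icc_self
    (closure_Ioo hab.ne).ge⟩

theorem ContDiffOn.hasDerivAt_iteratedDerivWithin {f : ℝ → E} {a b y : ℝ} {k : WithTop ℕ∞}
    {n : ℕ} (hf : ContDiffOn ℝ k f (Icc a b)) (hab : a < b) (hn : n < k) (hy : y ∈ Ioo a b) :
    HasDerivAt (iteratedDerivWithin n f (Icc a b))
      (iteratedDerivWithin (n + 1) f (Icc a b) y) y := by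
  have hnhds : Icc a b ∈ 𝓝 y := Icc_mem_nhds hy.1 hy.2
  rw [iteratedDerivWithin_succ, derivWithin_of_mem_nhds hnhds]
  exact ((hf.differentiableOn_iteratedDerivWithin hn (uniqueDiffOn_Icc hab)).differentiableAt
    hnhds).hasDerivAt

theorem hasDerivAt_one_sub_sq (y : ℝ) :
    HasDerivAt (fun x : ℝ ↦ (1 : ℂ) - (x : ℂ) ^ 2) (-2 * (y : ℂ)) y := by
  simpa using ((Complex.ofRealCLM.hasDerivAt (x := y)).pow 2).const_sub 1

end Calculus

/-- The equation defining `Σ_V` for `V ≡ -1`, with `h'` and `h''` standing for the first two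
derivatives of `h`. -/
def SolvesOn (lam : ℂ) (s : Set ℝ) (h h' h'' : ℝ → ℂ) : Prop :=
  ∀ y ∈ s, -(1 - (y : ℂ) ^ 2) * h'' y + 2 * (lam + 1) * y * h' y
    + lam * (lam + 1) * h y - h y = 0

theorem SolvesOn.deriv {lam : ℂ} {s : Set ℝ} {h h' h'' h''' : ℝ → ℂ} (hs : IsOpen s)
    (hsol : SolvesOn lam s h h' h'') (h₁ : ∀ y ∈ s, HasDerivAt h (h' y) y)
    (h₂ : ∀ y ∈ s, HasDerivAt h' (h'' y) y) (h₃ : ∀ y ∈ s, HasDerivAt h'' (h''' y) y) :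
    SolvesOn (lam + 1) s h' h'' h''' := by
  intro y hy
  have hE : HasDerivAt (fun x : ℝ ↦ -(1 - (x : ℂ) ^ 2) * h'' x + 2 * (lam + 1) * x * h' x
      + lam * (lam + 1) * h x - h x)
      (-(-2 * (y : ℂ)) * h'' y + -(1 - (y : ℂ) ^ 2) * h''' y
        + (2 * (lam + 1) * 1 * h' y + 2 * (lam + 1) * y * h'' y)
        + lam * (lam + 1) * h' y - h' y) y :=
    ((((hasDerivAt_one_sub_sq y).neg.mul (h₃ y hy)).add
      ((Complex.ofRealCLM.hasDerivAt.const_mul (2 * (lam + 1))).mul (h₂ y hy))).add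
      ((h₁ y hy).const_mul (lam * (lam + 1)))).sub (h₁ y hy)
  linear_combination hE.eq_zero_of_eqOn_zero hs hy fun x hx ↦ hsol x hx

/-- Multiplying by `conj lam` is what makes the cross terms `lam x (g ḡ' - g' ḡ)` of the
derivative purely imaginary, see `hasDerivAt_odeLyapunov`. -/
def odeLyapunov (lam : ℂ) (g g' : ℝ → ℂ) (x : ℝ) : ℝ :=
  (conj lam * (lam * x * (g x * conj (g x)) - (1 - (x : ℂ) ^ 2) * g' x * conj (g x))).re

theorem odeLyapunov_one (lam : ℂ) (g g' : ℝ → ℂ) :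
    odeLyapunov lam g g' 1 = Complex.normSq lam * Complex.normSq (g 1) := by
  simp [odeLyapunov, Complex.mul_conj, Complex.normSq_apply, ← mul_assoc]

theorem odeLyapunov_neg_one (lam : ℂ) (g g' : ℝ → ℂ) :
    odeLyapunov lam g g' (-1) = -(Complex.normSq lam * Complex.normSq (g (-1))) := by
  simp [odeLyapunov, Complex.mul_conj, Complex.normSq_apply, ← mul_assoc]

theorem ContinuousOn.odeLyapunov {lam : ℂ} {g g' : ℝ → ℂ} {s : Set ℝ} (hg : ContinuousOn g s)
    (hg' : ContinuousOn g' s) : ContinuousOn (odeLyapunov lam g g') s := by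
  unfold _root_.odeLyapunov
  fun_prop

theorem hasDerivAt_odeLyapunov {lam : ℂ} {s : Set ℝ} {g g' g'' : ℝ → ℂ} {y : ℝ}
    (hsol : SolvesOn lam s g g' g'') (hy : y ∈ s)
    (hg : HasDerivAt g (g' y) y) (hg' : HasDerivAt g' (g'' y) y) :
    HasDerivAt (odeLyapunov lam g g')
      (lam.re * ((1 - Complex.normSq lam) * Complex.normSq (g y)
        - (1 - y ^ 2) * Complex.normSq (g' y))) y := by
  have hΦ : HasDerivAt (fun x : ℝ ↦ conj lam * (lam * x * (g x * conj (g x))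
      - (1 - (x : ℂ) ^ 2) * g' x * conj (g x)))
      (conj lam * ((lam * 1 * (g y * conj (g y))
        + lam * y * (g' y * conj (g y) + g y * conj (g' y)))
        - ((-2 * (y : ℂ) * g' y + (1 - (y : ℂ) ^ 2) * g'' y) * conj (g y)
          + (1 - (y : ℂ) ^ 2) * g' y * conj (g' y)))) y :=
    ((((Complex.ofRealCLM.hasDerivAt.const_mul lam).mul (hg.mul hg.star)).sub
      (((hasDerivAt_one_sub_sq y).mul hg').mul hg.star))).const_mul (conj lam)
  have hre := Complex.reCLM.hasFDerivAt.comp_hasDerivAt y hΦ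
  simp only [Function.comp_def, Complex.reCLM_apply] at hre
  refine hre.congr_deriv ?_
  rw [show conj lam * ((lam * 1 * (g y * conj (g y))
      + lam * y * (g' y * conj (g y) + g y * conj (g' y)))
      - ((-2 * (y : ℂ) * g' y + (1 - (y : ℂ) ^ 2) * g'' y) * conj (g y)
        + (1 - (y : ℂ) ^ 2) * g' y * conj (g' y)))
      = conj lam * (1 - lam ^ 2) * (g y * conj (g y))
        - conj lam * (1 - (y : ℂ) ^ 2) * (g' y * conj (g' y))
        + conj lam * lam * y * (g y * conj (g' y) - g' y * conj (g y)) by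
    linear_combination (conj lam * conj (g y)) * hsol y hy]
  simp only [pow_two, Complex.add_re, Complex.sub_re, Complex.mul_re, Complex.conj_re,
    Complex.one_re, Complex.conj_im, Complex.sub_im, Complex.one_im, Complex.mul_im, zero_sub,
    neg_add_rev, neg_mul, sub_neg_eq_add, mul_neg, Complex.ofReal_re, Complex.ofReal_im, mul_zero,
    sub_zero, zero_mul, add_zero, sub_self, zero_add, Complex.normSq_apply]
  ring

theorem eqOn_zero_of_solvesOn {lam : ℂ} (hre : 0 < lam.re) (hnorm : 1 ≤ Complex.normSq lam)
    {g g' g'' : ℝ → ℂ} (hgc : ContinuousOn g (Icc (-1) 1)) (hg'c : ContinuousOn g' (Icc (-1) 1))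
    (hg : ∀ y ∈ Ioo (-1) 1, HasDerivAt g (g' y) y)
    (hg' : ∀ y ∈ Ioo (-1) 1, HasDerivAt g' (g'' y) y)
    (hsol : SolvesOn lam (Ioo (-1) 1) g g' g'') : EqOn g 0 (Icc (-1) 1) := by
  set D : ℝ → ℝ := fun y ↦ lam.re * ((1 - Complex.normSq lam) * Complex.normSq (g y)
    - (1 - y ^ 2) * Complex.normSq (g' y))
  have hψ' : ∀ y ∈ Ioo (-1 : ℝ) 1, HasDerivAt (odeLyapunov lam g g') (D y) y := fun y hy ↦
    hasDerivAt_odeLyapunov hsol hy (hg y hy) (hg' y hy)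
  have hsq : ∀ y ∈ Ioo (-1 : ℝ) 1, 0 < 1 - y ^ 2 := fun y hy ↦ by nlinarith [hy.1, hy.2]
  have hgain : ∀ y, (1 - Complex.normSq lam) * Complex.normSq (g y) ≤ 0 := fun y ↦
    mul_nonpos_of_nonpos_of_nonneg (by linarith) (Complex.normSq_nonneg _)
  have hloss : ∀ y ∈ Ioo (-1 : ℝ) 1, 0 ≤ (1 - y ^ 2) * Complex.normSq (g' y) := fun y hy ↦
    mul_nonneg (hsq y hy).le (Complex.normSq_nonneg _)
  have hanti : AntitoneOn (odeLyapunov lam g g') (Icc (-1) 1) := by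
    refine antitoneOn_of_hasDerivWithinAt_nonpos (f' := D) (convex_Icc _ _)
      (hgc.odeLyapunov hg'c) (fun y hy ↦ ?_) fun y hy ↦ ?_ <;> rw [interior_Icc] at hy
    exacts [(hψ' y hy).hasDerivWithinAt,
      mul_nonpos_of_nonneg_of_nonpos hre.le (by linarith [hgain y, hloss y hy])]
  have hends := hanti (left_mem_Icc.2 (by norm_num)) (right_mem_Icc.2 (by norm_num))
    (by norm_num : (-1 : ℝ) ≤ 1)
  rw [odeLyapunov_one, odeLyapunov_neg_one] at hends
  have := Complex.normSq_nonneg (g 1)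
  have := Complex.normSq_nonneg (g (-1))
  have hg1 : Complex.normSq (g 1) = 0 := by nlinarith
  have hgm1 : Complex.normSq (g (-1)) = 0 := by nlinarith
  have hψ0 : EqOn (odeLyapunov lam g g') 0 (Icc (-1) 1) := fun x hx ↦ by
    have hle := hanti hx (right_mem_Icc.2 (by norm_num)) hx.2
    have hge := hanti (left_mem_Icc.2 (by norm_num)) hx hx.1
    rw [odeLyapunov_one, hg1] at hle
    rw [odeLyapunov_neg_one, hgm1] at hge
    simp only [mul_zero, neg_zero, Pi.zero_apply] at hle hge ⊢
    exact le_antisymm hge hle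
  have hg'0 : ∀ y ∈ Ioo (-1 : ℝ) 1, HasDerivAt g 0 y := fun y hy ↦ by
    have hDy := (hψ' y hy).eq_zero_of_eqOn_zero isOpen_Ioo hy (hψ0.mono Ioo_subset_Icc_self)
    have hdiff := (mul_eq_zero.1 hDy).resolve_left hre.ne'
    have hg'y : Complex.normSq (g' y) = 0 :=
      (mul_eq_zero.1 (by linarith [hgain y, hloss y hy])).resolve_left (hsq y hy).ne'
    simpa [Complex.normSq_eq_zero.1 hg'y] using hg y hy
  obtain ⟨c, hc⟩ := exists_eqOn_const_Icc_of_hasDerivAt_zero (by norm_num) hgc hg'0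
  intro y hy
  rw [hc hy, ← hc (right_mem_Icc.2 (by norm_num)), Complex.normSq_eq_zero.1 hg1, Pi.zero_apply]

/-- Triviality of the spectral set for the Yang–Mills potential `V ≡ −1`
(Lemma `lem:specYM`): if `Re λ ≥ 0` and `f ∈ C^∞([-1,1])` is odd and satisfies
`−(1−y²)f'' + 2(λ+1)y f' + λ(λ+1)f − f = 0` on `(-1,1)`, then `f = 0`. -/
theorem stmt14 (lam : ℂ) (hlam : 0 ≤ lam.re) (f : ℝ → ℂ)
    (hf : ContDiffOn ℝ (⊤:ℕ∞) f (Icc (-1:ℝ) 1))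
    (hodd : ∀ y ∈ Icc (-1:ℝ) 1, f (-y) = - f y)
    (hODE : ∀ y ∈ Ioo (-1:ℝ) 1,
      -(1 - (y:ℂ)^2) * deriv (deriv f) y + 2 * (lam + 1) * (y:ℂ) * deriv f y
        + lam * (lam + 1) * f y - f y = 0) :
    ∀ y ∈ Icc (-1:ℝ) 1, f y = 0 := by
  set d : ℕ → ℝ → ℂ := fun n ↦ iteratedDerivWithin n f (Icc (-1) 1)
  have hsmooth : ∀ n : ℕ, (n : WithTop ℕ∞) < (⊤ : ℕ∞) := fun n ↦ mod_cast ENat.natCast_lt_top n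
  have hd : ∀ n, ∀ y ∈ Ioo (-1 : ℝ) 1, HasDerivAt (d n) (d (n + 1) y) y := fun n y hy ↦
    hf.hasDerivAt_iteratedDerivWithin (by norm_num) (hsmooth n) hy
  have hdc : ∀ n, ContinuousOn (d n) (Icc (-1) 1) := fun n ↦
    hf.continuousOn_iteratedDerivWithin (hsmooth n).le (uniqueDiffOn_Icc (by norm_num))
  have hd0 : d 0 = f := iteratedDerivWithin_zero
  have hsol : SolvesOn lam (Ioo (-1) 1) f (d 1) (d 2) := fun y hy ↦ by
    have hderiv : deriv f =ᶠ[𝓝 y] d 1 := eventually_of_mem (isOpen_Ioo.mem_nhds hy)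
      fun x hx ↦ hd0 ▸ (hd 0 x hx).deriv
    rw [← (hd 1 y hy).deriv, ← hderiv.deriv_eq, ← hderiv.eq_of_nhds]
    exact hODE y hy
  have hre : 1 ≤ (lam + 1).re := by simpa using hlam
  have hd1 : EqOn (d 1) 0 (Icc (-1) 1) :=
    eqOn_zero_of_solvesOn (by linarith) (by nlinarith [Complex.re_sq_le_normSq (lam + 1)])
      (hdc 1) (hdc 2) (hd 1) (hd 2) (hsol.deriv isOpen_Ioo (hd0 ▸ hd 0) (hd 1) (hd 2))
  obtain ⟨c, hc⟩ := exists_eqOn_const_Icc_of_hasDerivAt_zero (by norm_num) hf.continuousOn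
    fun y hy ↦ by simpa [hd0, hd1 (Ioo_subset_Icc_self hy)] using hd 0 y hy
  have hf0 : f 0 = 0 := by
    have := hodd 0 (by norm_num)
    rw [neg_zero] at this
    linear_combination this / 2
  intro y hy
  rw [hc hy, ← hc (by norm_num : (0 : ℝ) ∈ Icc (-1) 1), hf0]
end
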